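/- arXiv:1104.5401 — 3 statements merged into one kernel-verified Lean document; each statement's English description precedes it below -/
import Mathlib

section
/- Let r ≥ 1, let 0 < p < 1, and let 𝒫 be a hereditary property of r-graphs such that 𝒫ⁿ is nonempty for every n. For each n define c_n by Pr[G(n,p) ∈ 𝒫ⁿ] = 2^{-c_n · C(n,r)}, where C(n,r) denotes the binomial coefficient. Then the limit lim_{n→∞} c_n exists (as a finite real number). -/
open Finset

/-- The set of all potential edges of an `r`-uniform hypergraph on vertex set `Fin n`:
the `r`-element subsets of the vertex set. -/
def edgeUniv (r n : ℕ) : Finset (Finset (Fin n)) := Finset.powersetCard r Finset.univ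

/-- `G` is an `r`-uniform hypergraph on `Fin n`: a set of `r`-element subsets of the vertices. -/
def IsRGraph (r n : ℕ) (G : Finset (Finset (Fin n))) : Prop := G ⊆ edgeUniv r n

/-- The probability that the random `r`-graph `G(n,p)` (each `r`-set being an edge
independently with probability `p`) belongs to the collection `A`. -/
noncomputable def prG (r n : ℕ) (p : ℝ) (A : Set (Finset (Finset (Fin n)))) : ℝ :=
  ∑ E ∈ (edgeUniv r n).powerset,
    Set.indicator A (fun E => p ^ E.card * (1 - p) ^ ((edgeUniv r n).card - E.card)) E

/-- The `r`-graph `F` on `Fin k` appears as an induced subgraph of `G` (an `r`-graph on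
`Fin n`) on the vertex subset `U`. -/
def IsInducedCopyAt (r k n : ℕ) (F : Finset (Finset (Fin k)))
    (G : Finset (Finset (Fin n))) (U : Finset (Fin n)) : Prop :=
  ∃ f : Fin k ↪ Fin n, Finset.univ.map f = U ∧
    ∀ e : Finset (Fin k), e.card = r → (e ∈ F ↔ e.map f ∈ G)

/-- `G` has an induced subgraph on the vertex subset `U` isomorphic to a member of the
family `Fam` (where `Fam k` is the set of members of the family on `k` vertices). -/
def HasCopyAt (r n : ℕ) (Fam : ∀ k, Set (Finset (Finset (Fin k))))
    (G : Finset (Finset (Fin n))) (U : Finset (Fin n)) : Prop :=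
  ∃ k, ∃ H ∈ Fam k, IsInducedCopyAt r k n H G U

/-- `Forb(Fam)ⁿ` : the `r`-graphs on `n` vertices with no induced subgraph isomorphic to a
member of `Fam`. -/
def ForbN (r : ℕ) (Fam : ∀ k, Set (Finset (Finset (Fin k)))) (n : ℕ) :
    Set (Finset (Finset (Fin n))) :=
  {G | IsRGraph r n G ∧ ∀ U, ¬ HasCopyAt r n Fam G U}

/-- A partial Steiner system with parameters `(r,m,n)`: a collection of `m`-element
subsets of `Fin n` such that every `r`-element subset is contained in at most one member. -/
def IsSteiner (r m n : ℕ) (D : Finset (Finset (Fin n))) : Prop :=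
  (∀ B ∈ D, B.card = m) ∧
  ∀ e : Finset (Fin n), e.card = r →
    ∀ B₁ ∈ D, ∀ B₂ ∈ D, e ⊆ B₁ → e ⊆ B₂ → B₁ = B₂

/-!
Write `μₙ = Pr[G(n,p) ∈ Pⁿ]`, the mass of the family `Pⁿ` under the product Bernoulli measure on
sets of `r`-edges. By heredity, the trace of `Pⁿ⁺¹` on the edges avoiding a vertex `v` embeds into
`Pⁿ`, so it has mass at most `μₙ`. Every edge avoids exactly `n + 1 - r` vertices, so the
product-measure form of Shearer's lemma gives `μₙ₊₁ ^ (n + 1 - r) ≤ μₙ ^ (n + 1)`; that lemma is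
proved by induction on the ground set, the inductive step being Hölder's inequality in the form of
superadditivity of the geometric mean. As `C(n+1,r) (n+1-r) = C(n,r) (n+1)`, this says that `cₙ`
is nondecreasing for `n ≥ r`, and `cₙ ≤ -log₂ min(p, 1-p)` because `Pⁿ` is nonempty.
-/

section GeomMean

variable {κ : Type*}

lemma geom_mean_add_geom_mean_le {T : Finset κ} (hT : T.Nonempty) {x y : κ → ℝ}
    (hx : ∀ v ∈ T, 0 ≤ x v) (hy : ∀ v ∈ T, 0 ≤ y v) :
    (∏ v ∈ T, x v) ^ (#T : ℝ)⁻¹ + (∏ v ∈ T, y v) ^ (#T : ℝ)⁻¹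
      ≤ (∏ v ∈ T, (x v + y v)) ^ (#T : ℝ)⁻¹ := by
  have hw : (0 : ℝ) < (#T : ℝ)⁻¹ := inv_pos.2 (Nat.cast_pos.2 hT.card_pos)
  by_cases hpos : ∀ v ∈ T, 0 < x v + y v
  · have hwsum : ∑ _v ∈ T, (#T : ℝ)⁻¹ = 1 := by
      rw [sum_const, nsmul_eq_mul, mul_inv_cancel₀ (Nat.cast_ne_zero.2 hT.card_pos.ne')]
    have amgm : ∀ z : κ → ℝ, (∀ v ∈ T, 0 ≤ z v) →
        (∏ v ∈ T, z v) ^ (#T : ℝ)⁻¹ / (∏ v ∈ T, (x v + y v)) ^ (#T : ℝ)⁻¹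
          ≤ ∑ v ∈ T, (#T : ℝ)⁻¹ * (z v / (x v + y v)) := fun z hz => by
      have := Real.geom_mean_le_arith_mean_weighted T _ (fun v => z v / (x v + y v))
        (fun _ _ => hw.le) hwsum fun v hv => div_nonneg (hz v hv) (hpos v hv).le
      rwa [Real.finsetProd_rpow _ _ (fun v hv => div_nonneg (hz v hv) (hpos v hv).le),
        prod_div_distrib, Real.div_rpow (prod_nonneg hz)
          (prod_nonneg fun v hv => (hpos v hv).le)] at this
    have hsum : ∑ v ∈ T, (#T : ℝ)⁻¹ * (x v / (x v + y v))
        + ∑ v ∈ T, (#T : ℝ)⁻¹ * (y v / (x v + y v)) = 1 := by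
      rw [← sum_add_distrib, ← hwsum]
      refine sum_congr rfl fun v hv => ?_
      rw [← mul_add, ← add_div, div_self (hpos v hv).ne', mul_one]
    have hG : 0 < (∏ v ∈ T, (x v + y v)) ^ (#T : ℝ)⁻¹ :=
      Real.rpow_pos_of_pos (prod_pos hpos) _
    rw [← div_le_one hG, add_div, ← hsum]
    exact add_le_add (amgm x hx) (amgm y hy)
  · push Not at hpos
    obtain ⟨v, hv, hv0⟩ := hpos
    have hx0 : x v = 0 := by linarith [hx v hv, hy v hv]
    have hy0 : y v = 0 := by linarith [hx v hv, hy v hv]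
    rw [prod_eq_zero hv hx0, prod_eq_zero hv hy0, Real.zero_rpow hw.ne', add_zero]
    exact Real.rpow_nonneg (prod_nonneg fun v hv => add_nonneg (hx v hv) (hy v hv)) _

lemma add_pow_card_le_prod_add_mul {T : Finset κ} {x y : κ → ℝ}
    (hx : ∀ v ∈ T, 0 ≤ x v) (hy : ∀ v ∈ T, 0 ≤ y v) {α β Q : ℝ} (hα : 0 ≤ α) (hβ : 0 ≤ β)
    (hQ : 0 ≤ Q) (hαQ : α ^ #T ≤ (∏ v ∈ T, x v) * Q) (hβQ : β ^ #T ≤ (∏ v ∈ T, y v) * Q) :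
    (α + β) ^ #T ≤ (∏ v ∈ T, (x v + y v)) * Q := by
  rcases T.eq_empty_or_nonempty with rfl | hT
  · simpa using hαQ
  have hn : (0 : ℝ) < #T := Nat.cast_pos.2 hT.card_pos
  have root : ∀ {γ X : ℝ}, 0 ≤ γ → 0 ≤ X → γ ^ #T ≤ X → γ ≤ X ^ (#T : ℝ)⁻¹ := fun hγ hX h => by
    rwa [Real.le_rpow_inv_iff_of_pos hγ hX hn, Real.rpow_natCast]
  have hX := prod_nonneg hx
  have hY := prod_nonneg hy
  have hXY := prod_nonneg fun v hv => add_nonneg (hx v hv) (hy v hv)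
  suffices α + β ≤ ((∏ v ∈ T, (x v + y v)) * Q) ^ (#T : ℝ)⁻¹ by
    rwa [Real.le_rpow_inv_iff_of_pos (add_nonneg hα hβ) (mul_nonneg hXY hQ) hn,
      Real.rpow_natCast] at this
  calc α + β ≤ ((∏ v ∈ T, x v) * Q) ^ (#T : ℝ)⁻¹ + ((∏ v ∈ T, y v) * Q) ^ (#T : ℝ)⁻¹ :=
        add_le_add (root hα (mul_nonneg hX hQ) hαQ) (root hβ (mul_nonneg hY hQ) hβQ)
    _ = ((∏ v ∈ T, x v) ^ (#T : ℝ)⁻¹ + (∏ v ∈ T, y v) ^ (#T : ℝ)⁻¹) * Q ^ (#T : ℝ)⁻¹ := by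
        rw [Real.mul_rpow hX hQ, Real.mul_rpow hY hQ, add_mul]
    _ ≤ (∏ v ∈ T, (x v + y v)) ^ (#T : ℝ)⁻¹ * Q ^ (#T : ℝ)⁻¹ := by
        gcongr
        exact geom_mean_add_geom_mean_le hT hx hy
    _ = ((∏ v ∈ T, (x v + y v)) * Q) ^ (#T : ℝ)⁻¹ := (Real.mul_rpow hXY hQ).symm

lemma mul_pow_card_le_prod_mul_mul {T : Finset κ} {z : κ → ℝ} {a m Q : ℝ}
    (ha : 0 ≤ a) (h : m ^ #T ≤ (∏ v ∈ T, z v) * Q) :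
    (a * m) ^ #T ≤ (∏ v ∈ T, a * z v) * Q := by
  rw [mul_pow, prod_mul_distrib, prod_const, mul_assoc]
  exact mul_le_mul_of_nonneg_left h (pow_nonneg ha _)

end GeomMean

section BernoulliMass

variable {ι : Type*} {p : ℝ}

noncomputable def bernoulliMass (p : ℝ) (E : Finset ι) (A : Finset (Finset ι)) : ℝ :=
  ∑ F ∈ A, p ^ #F * (1 - p) ^ (#E - #F)

lemma bernoulliMass_nonneg (hp0 : 0 ≤ p) (hp1 : p ≤ 1) (E : Finset ι) (A : Finset (Finset ι)) :
    0 ≤ bernoulliMass p E A :=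
  sum_nonneg fun _ _ => mul_nonneg (pow_nonneg hp0 _) (pow_nonneg (sub_nonneg.2 hp1) _)

lemma bernoulliMass_mono (hp0 : 0 ≤ p) (hp1 : p ≤ 1) (E : Finset ι) {A B : Finset (Finset ι)}
    (h : A ⊆ B) : bernoulliMass p E A ≤ bernoulliMass p E B :=
  sum_le_sum_of_subset_of_nonneg h fun _ _ _ =>
    mul_nonneg (pow_nonneg hp0 _) (pow_nonneg (sub_nonneg.2 hp1) _)

lemma bernoulliMass_map {κ : Type*} (f : ι ↪ κ) (E : Finset ι) (A : Finset (Finset ι)) :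
    bernoulliMass p (E.map f) (A.map (mapEmbedding f).toEmbedding) = bernoulliMass p E A := by
  simp [bernoulliMass]

lemma single_le_bernoulliMass (hp0 : 0 ≤ p) (hp1 : p ≤ 1) {E F : Finset ι}
    {A : Finset (Finset ι)} (hF : F ∈ A) (hFE : F ⊆ E) :
    min p (1 - p) ^ #E ≤ bernoulliMass p E A := by
  have hm : 0 ≤ min p (1 - p) := le_min hp0 (sub_nonneg.2 hp1)
  calc min p (1 - p) ^ #E = min p (1 - p) ^ #F * min p (1 - p) ^ (#E - #F) := by
        rw [← pow_add, Nat.add_sub_cancel' (card_le_card hFE)]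
    _ ≤ p ^ #F * (1 - p) ^ (#E - #F) :=
        mul_le_mul (pow_le_pow_left₀ hm (min_le_left _ _) _)
          (pow_le_pow_left₀ hm (min_le_right _ _) _) (pow_nonneg hm _) (pow_nonneg hp0 _)
    _ ≤ bernoulliMass p E A :=
        single_le_sum (f := fun F => p ^ #F * (1 - p) ^ (#E - #F))
          (fun _ _ => mul_nonneg (pow_nonneg hp0 _) (pow_nonneg (sub_nonneg.2 hp1) _)) hF

variable [DecidableEq ι]

lemma bernoulliMass_insert {e : ι} {E : Finset ι} (he : e ∉ E) {A : Finset (Finset ι)}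
    (hA : A ⊆ (insert e E).powerset) :
    bernoulliMass p (insert e E) A =
      (1 - p) * bernoulliMass p E (A.nonMemberSubfamily e) +
        p * bernoulliMass p E (A.memberSubfamily e) := by
  have hsub : ∀ F ∈ A, F ⊆ insert e E := fun F hF => mem_powerset.1 (hA hF)
  have hinj : Set.InjOn (fun F : Finset ι => F.erase e) ({F ∈ A | e ∈ F} : Finset _) :=
    fun F hF G hG => erase_injOn' e (mem_filter.1 hF).2 (mem_filter.1 hG).2
  rw [bernoulliMass, ← sum_filter_not_add_sum_filter A (e ∈ ·), bernoulliMass, bernoulliMass,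
    memberSubfamily, sum_image hinj, mul_sum, mul_sum, card_insert_of_notMem he]
  congr 1
  · refine sum_congr rfl fun F hF => ?_
    obtain ⟨hFA, heF⟩ := mem_filter.1 hF
    have hFE : #F ≤ #E := card_le_card ((subset_insert_iff_of_notMem heF).1 (hsub F hFA))
    rw [show #E + 1 - #F = #E - #F + 1 by omega, pow_succ]
    ring
  · refine sum_congr rfl fun F hF => ?_
    obtain ⟨hFA, heF⟩ := mem_filter.1 hF
    have hFE : #F ≤ #E + 1 := by simpa [card_insert_of_notMem he] using card_le_card (hsub F hFA)
    have hF0 : 0 < #F := card_pos.2 ⟨e, heF⟩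
    rw [card_erase_of_mem heF, show #E + 1 - #F = #E - (#F - 1) by omega,
      ← Nat.sub_add_cancel hF0, pow_succ, Nat.add_sub_cancel]
    ring

lemma nonMemberSubfamily_subset_powerset {e : ι} {E : Finset ι} {A : Finset (Finset ι)}
    (hA : A ⊆ (insert e E).powerset) : A.nonMemberSubfamily e ⊆ E.powerset := fun F hF => by
  obtain ⟨hFA, heF⟩ := mem_nonMemberSubfamily.1 hF
  exact mem_powerset.2 ((subset_insert_iff_of_notMem heF).1 (mem_powerset.1 (hA hFA)))

lemma memberSubfamily_subset_powerset {e : ι} {E : Finset ι} {A : Finset (Finset ι)}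
    (hA : A ⊆ (insert e E).powerset) : A.memberSubfamily e ⊆ E.powerset := fun F hF => by
  obtain ⟨hFA, heF⟩ := mem_memberSubfamily.1 hF
  exact mem_powerset.2 ((insert_subset_insert_iff heF).1 (mem_powerset.1 (hA hFA)))

def familyTrace (A : Finset (Finset ι)) (S : Finset ι) : Finset (Finset ι) :=
  A.image (· ∩ S)

lemma familyTrace_subset_powerset (A : Finset (Finset ι)) (S : Finset ι) :
    familyTrace A S ⊆ S.powerset :=
  image_subset_iff.2 fun _ _ => mem_powerset.2 inter_subset_right

lemma nonMemberSubfamily_familyTrace {e : ι} {S : Finset ι} (he : e ∈ S)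
    (A : Finset (Finset ι)) :
    (familyTrace A S).nonMemberSubfamily e = familyTrace (A.nonMemberSubfamily e) (S.erase e) := by
  ext G
  simp only [mem_nonMemberSubfamily, familyTrace, mem_image]
  grind

lemma memberSubfamily_familyTrace {e : ι} {S : Finset ι} (he : e ∈ S)
    (A : Finset (Finset ι)) :
    (familyTrace A S).memberSubfamily e = familyTrace (A.memberSubfamily e) (S.erase e) := by
  ext G
  simp only [mem_memberSubfamily, familyTrace, mem_image]
  constructor
  · rintro ⟨⟨F, hF, hFS⟩, heG⟩
    have heF : e ∈ F := (mem_inter.1 (hFS ▸ mem_insert_self e G)).1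
    refine ⟨F.erase e, ⟨by rwa [insert_erase heF], notMem_erase e F⟩, ?_⟩
    rw [erase_inter, inter_erase, erase_idem, hFS, erase_insert heG]
  · rintro ⟨F, ⟨hF, heF⟩, rfl⟩
    refine ⟨⟨insert e F, hF, ?_⟩, fun h => heF (mem_inter.1 h).1⟩
    grind

lemma familyTrace_nonMemberSubfamily_subset (e : ι) (S : Finset ι) (A : Finset (Finset ι)) :
    familyTrace (A.nonMemberSubfamily e) S ⊆ familyTrace A S :=
  image_subset_image (filter_subset _ _)

lemma familyTrace_memberSubfamily_subset {e : ι} {S : Finset ι} (he : e ∉ S)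
    (A : Finset (Finset ι)) :
    familyTrace (A.memberSubfamily e) S ⊆ familyTrace A S := by
  intro G
  simp only [familyTrace, mem_image, mem_memberSubfamily]
  rintro ⟨F, ⟨hF, -⟩, rfl⟩
  exact ⟨insert e F, hF, by grind⟩

lemma bernoulliMass_familyTrace_of_mem {e : ι} {S : Finset ι} (he : e ∈ S)
    (A : Finset (Finset ι)) :
    bernoulliMass p S (familyTrace A S) =
      (1 - p) * bernoulliMass p (S.erase e) (familyTrace (A.nonMemberSubfamily e) (S.erase e)) +
        p * bernoulliMass p (S.erase e) (familyTrace (A.memberSubfamily e) (S.erase e)) := by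
  have hS : insert e (S.erase e) = S := insert_erase he
  have := bernoulliMass_insert (p := p) (notMem_erase e S) (A := familyTrace A S)
    (by rw [hS]; exact familyTrace_subset_powerset A S)
  rwa [hS, nonMemberSubfamily_familyTrace he, memberSubfamily_familyTrace he] at this

lemma bernoulliMass_pow_le_prod_familyTrace {κ : Type*} (hp0 : 0 ≤ p) (hp1 : p ≤ 1) {t : ℕ}
    (ht : t ≠ 0) (V : Finset κ) (E : Finset ι) (S : κ → Finset ι) (hS : ∀ v ∈ V, S v ⊆ E)
    (hcov : ∀ e ∈ E, #{v ∈ V | e ∈ S v} = t) (A : Finset (Finset ι)) (hA : A ⊆ E.powerset) :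
    bernoulliMass p E A ^ t ≤ ∏ v ∈ V, bernoulliMass p (S v) (familyTrace A (S v)) := by
  have hμ := bernoulliMass_nonneg hp0 hp1 (ι := ι)
  induction E using Finset.induction_on generalizing S A with
  | empty =>
    rcases subset_singleton_iff.1 (powerset_empty ▸ hA) with rfl | rfl
    · simpa [bernoulliMass, zero_pow ht] using prod_nonneg fun v _ => hμ _ _
    · have hSv : ∀ v ∈ V, S v = ∅ := fun v hv => subset_empty.1 (hS v hv)
      simp +contextual [bernoulliMass, familyTrace, hSv]
  | @insert e E he ih =>
    set T := {v ∈ V | e ∈ S v}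
    set Q := ∏ v ∈ V with e ∉ S v, bernoulliMass p (S v) (familyTrace A (S v))
    have hT : #T = t := hcov e (mem_insert_self e E)
    have hS' : ∀ v ∈ V, (S v).erase e ⊆ E := fun v hv => subset_insert_iff.1 (hS v hv)
    have hcov' : ∀ e' ∈ E, #{v ∈ V | e' ∈ (S v).erase e} = t := fun e' he' => by
      rw [← hcov e' (mem_insert_of_mem he')]
      congr 1
      exact filter_congr fun v _ => by simp [ne_of_mem_of_not_mem he' he]
    have half : ∀ B ⊆ E.powerset, (∀ v ∈ V, e ∉ S v → familyTrace B (S v) ⊆ familyTrace A (S v)) →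
        bernoulliMass p E B ^ #T
          ≤ (∏ v ∈ T, bernoulliMass p ((S v).erase e) (familyTrace B ((S v).erase e))) * Q := by
      intro B hB hBA
      rw [hT]
      refine (ih _ hS' hcov' B hB).trans ?_
      rw [← prod_filter_mul_prod_filter_not V (e ∈ S ·)]
      refine mul_le_mul_of_nonneg_left (prod_le_prod (fun v _ => hμ _ _) fun v hv => ?_)
        (prod_nonneg fun v _ => hμ _ _)
      obtain ⟨hv, hev⟩ := mem_filter.1 hv
      rw [erase_eq_of_notMem hev]
      exact bernoulliMass_mono hp0 hp1 _ (hBA v hv hev)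
    have h₀ := half _ (nonMemberSubfamily_subset_powerset hA) fun v _ _ =>
      familyTrace_nonMemberSubfamily_subset e _ A
    have h₁ := half _ (memberSubfamily_subset_powerset hA) fun v _ hev =>
      familyTrace_memberSubfamily_subset hev A
    have hq : 0 ≤ 1 - p := sub_nonneg.2 hp1
    rw [bernoulliMass_insert he hA, ← hT]
    calc _ ≤ (∏ v ∈ T, ((1 - p) * bernoulliMass p ((S v).erase e)
              (familyTrace (A.nonMemberSubfamily e) ((S v).erase e))
            + p * bernoulliMass p ((S v).erase e)
              (familyTrace (A.memberSubfamily e) ((S v).erase e)))) * Q :=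
          add_pow_card_le_prod_add_mul (fun _ _ => mul_nonneg hq (hμ _ _))
            (fun _ _ => mul_nonneg hp0 (hμ _ _)) (mul_nonneg hq (hμ _ _))
            (mul_nonneg hp0 (hμ _ _)) (prod_nonneg fun _ _ => hμ _ _)
            (mul_pow_card_le_prod_mul_mul hq h₀) (mul_pow_card_le_prod_mul_mul hp0 h₁)
      _ = (∏ v ∈ T, bernoulliMass p (S v) (familyTrace A (S v))) * Q := by
          refine congrArg (· * Q) (prod_congr rfl fun v hv => ?_)
          exact (bernoulliMass_familyTrace_of_mem (mem_filter.1 hv).2 A).symm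
      _ = _ := prod_filter_mul_prod_filter_not V _ _

end BernoulliMass


section Hypergraphs

variable {r : ℕ} {p : ℝ} {P : ∀ n, Set (Finset (Finset (Fin n)))}

def IsHereditary (r : ℕ) (P : ∀ n, Set (Finset (Finset (Fin n)))) : Prop :=
  ∀ n, ∀ G ∈ P n, ∀ (k : ℕ) (H : Finset (Finset (Fin k))) (U : Finset (Fin n)),
    IsRGraph r k H → IsInducedCopyAt r k n H G U → H ∈ P k

open Classical in
noncomputable def graphFamily (r : ℕ) (P : ∀ n, Set (Finset (Finset (Fin n)))) (n : ℕ) :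
    Finset (Finset (Finset (Fin n))) :=
  {G ∈ (edgeUniv r n).powerset | G ∈ P n}

lemma mem_graphFamily {n : ℕ} {G : Finset (Finset (Fin n))} :
    G ∈ graphFamily r P n ↔ IsRGraph r n G ∧ G ∈ P n := by
  simp [graphFamily, IsRGraph]

lemma prG_eq_bernoulliMass (r n : ℕ) (p : ℝ) (P : ∀ n, Set (Finset (Finset (Fin n)))) :
    prG r n p (P n) = bernoulliMass p (edgeUniv r n) (graphFamily r P n) := by
  classical
  rw [prG, bernoulliMass, graphFamily, sum_filter]
  exact sum_congr rfl fun G _ => Set.indicator_apply _ _ _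

lemma card_edgeUniv (r n : ℕ) : #(edgeUniv r n) = n.choose r := by
  simp [edgeUniv]

lemma IsHereditary.comap_mem (hP : IsHereditary r P)
    {k n : ℕ} (f : Fin k ↪ Fin n) {G : Finset (Finset (Fin n))} (hG : G ∈ P n) :
    {e ∈ edgeUniv r k | e.map f ∈ G} ∈ P k :=
  hP n G hG k _ _ (filter_subset _ _)
    ⟨f, rfl, fun e he => by simp [edgeUniv, mem_powersetCard, he]⟩

lemma map_edgeUniv_succAbove (r n : ℕ) (v : Fin (n + 1)) :
    (edgeUniv r n).map (mapEmbedding v.succAboveEmb).toEmbedding = powersetCard r {v}ᶜ := by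
  rw [edgeUniv, ← powersetCard_map, map_eq_image, Fin.coe_succAboveEmb, Fin.image_succAbove_univ]

lemma card_filter_mem_powersetCard_compl {r n : ℕ} {e : Finset (Fin n)} (he : e ∈ edgeUniv r n) :
    #{v | e ∈ powersetCard r {v}ᶜ} = n - r := by
  rw [edgeUniv, mem_powersetCard] at he
  have : ({v | e ∈ powersetCard r {v}ᶜ} : Finset (Fin n)) = eᶜ := by
    ext v
    simp [he.2]
  rw [this, card_compl, Fintype.card_fin, he.2]

lemma bernoulliMass_familyTrace_graphFamily_le (hp0 : 0 ≤ p) (hp1 : p ≤ 1)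
    (hP : IsHereditary r P) {n : ℕ} (v : Fin (n + 1)) :
    bernoulliMass p (powersetCard r {v}ᶜ)
        (familyTrace (graphFamily r P (n + 1)) (powersetCard r {v}ᶜ))
      ≤ bernoulliMass p (edgeUniv r n) (graphFamily r P n) := by
  set f := (mapEmbedding v.succAboveEmb).toEmbedding
  rw [← map_edgeUniv_succAbove, ← bernoulliMass_map f (edgeUniv r n) (graphFamily r P n)]
  refine bernoulliMass_mono hp0 hp1 _ fun G' hG' => ?_
  obtain ⟨G, hG, rfl⟩ := mem_image.1 hG'
  refine mem_map.2 ⟨{e ∈ edgeUniv r n | f e ∈ G}, ?_, ?_⟩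
  · exact mem_graphFamily.2 ⟨filter_subset _ _,
      hP.comap_mem v.succAboveEmb (mem_graphFamily.1 hG).2⟩
  · show map f _ = _
    ext e
    simp only [mem_map, mem_filter, mem_inter]
    constructor
    · rintro ⟨a, ⟨ha, haG⟩, rfl⟩
      exact ⟨haG, a, ha, rfl⟩
    · rintro ⟨heG, a, ha, rfl⟩
      exact ⟨a, ⟨ha, heG⟩, rfl⟩

lemma bernoulliMass_graphFamily_succ_pow_le (hp0 : 0 ≤ p) (hp1 : p ≤ 1)
    (hP : IsHereditary r P) {n : ℕ} (hrn : r ≤ n) :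
    bernoulliMass p (edgeUniv r (n + 1)) (graphFamily r P (n + 1)) ^ (n + 1 - r)
      ≤ bernoulliMass p (edgeUniv r n) (graphFamily r P n) ^ (n + 1) := by
  classical
  calc _ ≤ ∏ v : Fin (n + 1), bernoulliMass p (powersetCard r {v}ᶜ)
          (familyTrace (graphFamily r P (n + 1)) (powersetCard r {v}ᶜ)) :=
        bernoulliMass_pow_le_prod_familyTrace hp0 hp1 (by omega) univ _ _
          (fun v _ => powersetCard_mono (subset_univ _))
          (fun e he => card_filter_mem_powersetCard_compl he) _ (filter_subset _ _)
    _ ≤ ∏ _v : Fin (n + 1), bernoulliMass p (edgeUniv r n) (graphFamily r P n) :=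
        prod_le_prod (fun _ _ => bernoulliMass_nonneg hp0 hp1 _ _)
          fun v _ => bernoulliMass_familyTrace_graphFamily_le hp0 hp1 hP v
    _ = _ := by simp

end Hypergraphs

lemma le_of_two_rpow_pow_le {c c' : ℝ} {N N' k k' : ℕ} (hNk : N' * k' = N * k)
    (hpos : 0 < N * k) (h : ((2 : ℝ) ^ (-c' * N')) ^ k' ≤ ((2 : ℝ) ^ (-c * N)) ^ k) :
    c ≤ c' := by
  rw [← Real.rpow_natCast, ← Real.rpow_natCast, ← Real.rpow_mul zero_le_two,
    ← Real.rpow_mul zero_le_two, Real.rpow_le_rpow_left_iff one_lt_two, mul_assoc, mul_assoc,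
    ← Nat.cast_mul, ← Nat.cast_mul, hNk] at h
  exact le_of_neg_le_neg (le_of_mul_le_mul_right h (Nat.cast_pos.2 hpos))

lemma le_neg_logb_of_pow_le {m c : ℝ} {N : ℕ} (hm : 0 < m) (hN : 0 < N)
    (h : m ^ N ≤ (2 : ℝ) ^ (-c * N)) : c ≤ -Real.logb 2 m := by
  rw [← Real.rpow_natCast, ← Real.rpow_logb two_pos (by norm_num) hm, ← Real.rpow_mul zero_le_two,
    Real.rpow_le_rpow_left_iff one_lt_two] at h
  linarith [le_of_mul_le_mul_right h (Nat.cast_pos.2 hN)]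

lemma exists_tendsto_of_le_succ_of_le {c : ℕ → ℝ} {N : ℕ} {B : ℝ}
    (hmono : ∀ n ≥ N, c n ≤ c (n + 1)) (hB : ∀ n ≥ N, c n ≤ B) :
    ∃ L, Filter.Tendsto c Filter.atTop (nhds L) := by
  have hmono' : Monotone fun j => c (j + N) :=
    monotone_nat_of_le_succ fun j => by
      simpa [Nat.add_right_comm j 1 N] using hmono (j + N) (Nat.le_add_left N j)
  have hbdd : BddAbove (Set.range fun j => c (j + N)) :=
    ⟨B, Set.forall_mem_range.2 fun j => hB (j + N) (Nat.le_add_left N j)⟩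
  exact ⟨_, (Filter.tendsto_add_atTop_iff_nat N).1 (tendsto_atTop_ciSup hmono' hbdd)⟩

theorem stmt_0_general (r : ℕ) (p : ℝ) (hp0 : 0 < p) (hp1 : p < 1)
    (P : ∀ n, Set (Finset (Finset (Fin n))))
    (hPgraph : ∀ n, ∀ G ∈ P n, IsRGraph r n G)
    (hPhered : ∀ n, ∀ G ∈ P n, ∀ (k : ℕ) (H : Finset (Finset (Fin k))) (U : Finset (Fin n)),
      IsRGraph r k H → IsInducedCopyAt r k n H G U → H ∈ P k)
    (hPne : ∀ n, (P n).Nonempty)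
    (c : ℕ → ℝ)
    (hc : ∀ n, prG r n p (P n) = 2 ^ (-(c n) * (n.choose r : ℝ))) :
    ∃ L : ℝ, Filter.Tendsto c Filter.atTop (nhds L) := by
  have hmass : ∀ n, bernoulliMass p (edgeUniv r n) (graphFamily r P n)
      = 2 ^ (-(c n) * (n.choose r : ℝ)) := fun n => (prG_eq_bernoulliMass r n p P).symm.trans (hc n)
  refine exists_tendsto_of_le_succ_of_le (N := r) (B := -Real.logb 2 (min p (1 - p)))
    (fun n hrn => ?_) (fun n hrn => ?_)
  · have h := bernoulliMass_graphFamily_succ_pow_le hp0.le hp1.le hPhered hrn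
    rw [hmass, hmass] at h
    exact le_of_two_rpow_pow_le (Nat.choose_mul_succ_eq n r).symm
      (Nat.mul_pos (Nat.choose_pos hrn) n.succ_pos) h
  · obtain ⟨G, hG⟩ := hPne n
    have h := single_le_bernoulliMass hp0.le hp1.le (A := graphFamily r P n)
      (mem_graphFamily.2 ⟨hPgraph n G hG, hG⟩) (hPgraph n G hG)
    rw [card_edgeUniv, hmass] at h
    exact le_neg_logb_of_pow_le (lt_min hp0 (sub_pos.2 hp1)) (Nat.choose_pos hrn) h

/-- **Alekseev; Bollobás–Thomason.** For a hereditary property `P` of `r`-graphs with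
`Pⁿ` nonempty for every `n`, defining `c_n` by `Pr[G(n,p) ∈ Pⁿ] = 2 ^ (-c_n * C(n,r))`,
the limit of `c_n` exists. -/
theorem stmt_0 (r : ℕ) (hr : 1 ≤ r) (p : ℝ) (hp0 : 0 < p) (hp1 : p < 1)
    (P : ∀ n, Set (Finset (Finset (Fin n))))
    (hPgraph : ∀ n, ∀ G ∈ P n, IsRGraph r n G)
    (hPhered : ∀ n, ∀ G ∈ P n, ∀ (k : ℕ) (H : Finset (Finset (Fin k))) (U : Finset (Fin n)),
      IsRGraph r k H → IsInducedCopyAt r k n H G U → H ∈ P k)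
    (hPne : ∀ n, (P n).Nonempty)
    (c : ℕ → ℝ)
    (hc : ∀ n, prG r n p (P n) = 2 ^ (-(c n) * (n.choose r : ℝ))) :
    ∃ L : ℝ, Filter.Tendsto c Filter.atTop (nhds L) :=
  stmt_0_general r p hp0 hp1 P hPgraph hPhered hPne c hc
end

section
/- Let ℱ be a collection of r-graphs each with at least t vertices, let 0 < p < 1, and let c = c(p,ℱ). Then for every ε > 0 there exist n₀ and δ > 0 (depending only on ε, p, ℱ) such that for every n > n₀, the probability that G(n,p) contains fewer than δ·n^t induced subgraphs lying in ℱ (i.e., fewer than δ·n^t vertex subsets U with G[U] isomorphic to a member of ℱ) is at most 2^{(-c+ε)·C(n,r)}. -/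
/-!
Fix a block size `m` with `c_m ≈ c` and `C(m,r)` large. If `G(n,p)` has fewer than `δ n ^ t`
copies, then all but an `η`-fraction of the `N = C(n,m)` sets of `m` vertices span no copy, and
each of these events has probability `Q = Pr[G(m,p) ∈ Forb] = 2 ^ (-c_m C(m,r))`. The events are
dependent, but every `r`-set lies in only `q = C(n-r,m-r)` blocks, so Finner's inequality bounds
`E ∏_M θ ^ [M copy-free]` by `∏_M (E θ ^ (q [M copy-free]))^(1/q) ≤ 2 ^ (N/q)` for
`θ = Q ^ (-1/q)`. Markov's inequality then bounds the probability by
`Q ^ ((1-η) N/q) 2 ^ (N/q) = 2 ^ ((1/C(m,r) - (1-η) c_m) C(n,r))`.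
For `r = 0` an `r`-graph is a single bit and one copy already forces `Ω(n ^ t)` copies.
-/

open Finset

namespace Supersaturation

open Filter Topology

section Bernoulli

variable {α : Type*} {p : ℝ}

noncomputable def bernoulliWeight (p : ℝ) (I A : Finset α) : ℝ := p ^ #A * (1 - p) ^ (#I - #A)

noncomputable def bernoulliExpect (p : ℝ) (I : Finset α) (g : Finset α → ℝ) : ℝ :=
  ∑ A ∈ I.powerset, bernoulliWeight p I A * g A

lemma bernoulliWeight_nonneg (hp0 : 0 ≤ p) (hp1 : p ≤ 1) (I A : Finset α) :
    0 ≤ bernoulliWeight p I A :=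
  mul_nonneg (pow_nonneg hp0 _) (pow_nonneg (sub_nonneg.2 hp1) _)

lemma bernoulliExpect_congr {I : Finset α} {g h : Finset α → ℝ} (hgh : ∀ A ⊆ I, g A = h A) :
    bernoulliExpect p I g = bernoulliExpect p I h :=
  sum_congr rfl fun A hA => by rw [hgh A (mem_powerset.1 hA)]

lemma bernoulliExpect_mono (hp0 : 0 ≤ p) (hp1 : p ≤ 1) {I : Finset α} {g h : Finset α → ℝ}
    (hgh : ∀ A ⊆ I, g A ≤ h A) : bernoulliExpect p I g ≤ bernoulliExpect p I h :=
  sum_le_sum fun A hA =>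
    mul_le_mul_of_nonneg_left (hgh A (mem_powerset.1 hA)) (bernoulliWeight_nonneg hp0 hp1 _ _)

lemma bernoulliExpect_nonneg (hp0 : 0 ≤ p) (hp1 : p ≤ 1) {I : Finset α} {g : Finset α → ℝ}
    (hg : ∀ A ⊆ I, 0 ≤ g A) : 0 ≤ bernoulliExpect p I g :=
  sum_nonneg fun A hA =>
    mul_nonneg (bernoulliWeight_nonneg hp0 hp1 _ _) (hg A (mem_powerset.1 hA))

lemma bernoulliExpect_const (I : Finset α) (c : ℝ) : bernoulliExpect p I (fun _ => c) = c := by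
  rw [bernoulliExpect, ← sum_mul]
  simp [bernoulliWeight, sum_pow_mul_eq_add_pow]

lemma bernoulliExpect_add (I : Finset α) (g h : Finset α → ℝ) :
    bernoulliExpect p I (fun A => g A + h A) = bernoulliExpect p I g + bernoulliExpect p I h := by
  simp only [bernoulliExpect, mul_add, sum_add_distrib]

lemma bernoulliExpect_const_mul (I : Finset α) (c : ℝ) (g : Finset α → ℝ) :
    bernoulliExpect p I (fun A => c * g A) = c * bernoulliExpect p I g := by
  simp only [bernoulliExpect, mul_sum]
  exact sum_congr rfl fun _ _ => by ring

lemma bernoulliExpect_empty (g : Finset α → ℝ) : bernoulliExpect p ∅ g = g ∅ := by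
  simp [bernoulliExpect, bernoulliWeight]

lemma bernoulliExpect_insert [DecidableEq α] {a : α} {I : Finset α} (ha : a ∉ I)
    (g : Finset α → ℝ) :
    bernoulliExpect p (insert a I) g =
      (1 - p) * bernoulliExpect p I g + p * bernoulliExpect p I (fun A => g (insert a A)) := by
  simp only [bernoulliExpect, sum_powerset_insert ha, mul_sum, ← sum_add_distrib]
  refine sum_congr rfl fun A hA => ?_
  have hAI := mem_powerset.1 hA
  have haA : a ∉ A := fun h => ha (hAI h)
  have hcard := card_le_card hAI
  have hsub : #I + 1 - #A = #I - #A + 1 := by omega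
  simp only [bernoulliWeight, card_insert_of_notMem ha, card_insert_of_notMem haA,
    Nat.add_sub_add_right, hsub, pow_succ]
  ring

lemma bernoulliExpect_map {β : Type*} (e : α ↪ β) (I : Finset α) (g : Finset β → ℝ) :
    bernoulliExpect p (I.map e) g = bernoulliExpect p I (fun A => g (A.map e)) := by
  have hpow : (I.map e).powerset = I.powerset.map (mapEmbedding e).toEmbedding := by
    ext A
    simp [subset_map_iff, eq_comm]
  simp [bernoulliExpect, hpow, bernoulliWeight]

lemma bernoulliExpect_comp_inter [DecidableEq α] {I S : Finset α} (hS : S ⊆ I)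
    (g : Finset α → ℝ) :
    bernoulliExpect p I (fun A => g (A ∩ S)) = bernoulliExpect p S g := by
  suffices key : ∀ T : Finset α, Disjoint S T →
      bernoulliExpect p (T ∪ S) (fun A => g (A ∩ S)) = bernoulliExpect p S g by
    simpa [sdiff_union_of_subset hS] using key (I \ S) disjoint_sdiff
  intro T
  induction T using Finset.induction_on with
  | empty =>
    intro _
    rw [empty_union]
    exact bernoulliExpect_congr fun A hA => by rw [inter_eq_left.2 hA]
  | insert a T haT ih =>
    intro hST
    have haS : a ∉ S := disjoint_right.1 hST (mem_insert_self a T)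
    have haTS : a ∉ T ∪ S := by simp [haT, haS]
    rw [insert_union, bernoulliExpect_insert haTS]
    simp only [insert_inter_of_notMem haS]
    rw [ih (hST.mono_right (subset_insert a T))]
    ring

open Classical in
lemma bernoulliExpect_ite_pow_le_two (hp0 : 0 ≤ p) (hp1 : p ≤ 1) {I : Finset α}
    {P : Set (Finset α)} {Q θ : ℝ} (hQ : 0 < Q) {q : ℕ} (hθq : θ ^ q = Q⁻¹)
    (hP : bernoulliExpect p I (P.indicator 1) ≤ Q) :
    bernoulliExpect p I (fun A => (if A ∈ P then θ else 1) ^ q) ≤ 2 :=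
  calc bernoulliExpect p I (fun A => (if A ∈ P then θ else 1) ^ q)
      ≤ bernoulliExpect p I (fun A => 1 + Q⁻¹ * P.indicator 1 A) :=
        bernoulliExpect_mono hp0 hp1 fun A _ => by
          by_cases hA : A ∈ P <;> simp [hA, hθq]
    _ ≤ 1 + Q⁻¹ * Q := by
        rw [bernoulliExpect_add, bernoulliExpect_const, bernoulliExpect_const_mul]
        gcongr
    _ = 2 := by rw [inv_mul_cancel₀ hQ.ne']; norm_num

end Bernoulli

lemma geom_mean_le_arith_mean_weighted_of_sum_le_one {κ : Type*} (J : Finset κ) (w z : κ → ℝ)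
    (hw : ∀ k ∈ J, 0 ≤ w k) (hw' : ∑ k ∈ J, w k ≤ 1) (hz : ∀ k ∈ J, 0 ≤ z k) :
    ∏ k ∈ J, z k ^ w k ≤ (1 - ∑ k ∈ J, w k) + ∑ k ∈ J, w k * z k := by
  -- pad `J` with one extra point of value `1` carrying the missing weight
  have key := Real.geom_mean_le_arith_mean_weighted (cons none (J.map .some) (by simp))
    (fun o => o.elim (1 - ∑ k ∈ J, w k) w) (fun o => o.elim 1 z)
    (by simpa using ⟨hw', hw⟩) (by simp) (by simpa using hz)
  simpa using key

/-- The pointwise step of Hölder's inequality: weighted AM-GM for the values `h k ^ q / T k`. -/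
lemma prod_le_mul_one_sub_add_sum {κ : Type*} {q : ℕ} (hq : 0 < q) (J : Finset κ) (hJ : #J ≤ q)
    (h T : κ → ℝ) (hh : ∀ k ∈ J, 0 ≤ h k) (hT : ∀ k ∈ J, 0 < T k) :
    ∏ k ∈ J, h k ≤ (∏ k ∈ J, T k ^ (q : ℝ)⁻¹) *
      ((1 - #J * (q : ℝ)⁻¹) + ∑ k ∈ J, (q : ℝ)⁻¹ * (h k ^ q / T k)) := by
  have hW : ∑ _k ∈ J, (q : ℝ)⁻¹ = #J * (q : ℝ)⁻¹ := by rw [sum_const, nsmul_eq_mul]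
  have hW1 : ∑ _k ∈ J, (q : ℝ)⁻¹ ≤ 1 := by
    rw [hW, ← div_eq_mul_inv, div_le_one (by exact_mod_cast hq)]
    exact_mod_cast hJ
  have hgm := geom_mean_le_arith_mean_weighted_of_sum_le_one J (fun _ => (q : ℝ)⁻¹)
    (fun k => h k ^ q / T k) (fun _ _ => by positivity) hW1
    (fun k hk => div_nonneg (pow_nonneg (hh k hk) _) (hT k hk).le)
  have hfac : ∀ k ∈ J, (h k ^ q / T k) ^ (q : ℝ)⁻¹ = h k / T k ^ (q : ℝ)⁻¹ := fun k hk => by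
    rw [Real.div_rpow (pow_nonneg (hh k hk) _) (hT k hk).le,
      Real.pow_rpow_inv_natCast (hh k hk) hq.ne']
  rw [prod_congr rfl hfac, prod_div_distrib, hW,
    div_le_iff₀ (prod_pos fun k hk => Real.rpow_pos_of_pos (hT k hk) _)] at hgm
  linarith

lemma sum_mul_prod_le_prod_Lq {β κ : Type*} (s : Finset β) (μ : β → ℝ) (hμ0 : ∀ b ∈ s, 0 ≤ μ b)
    (hμ1 : ∑ b ∈ s, μ b = 1) {q : ℕ} (hq : 0 < q) (J : Finset κ) (hJ : #J ≤ q)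
    (h : κ → β → ℝ) (hh : ∀ k ∈ J, ∀ b ∈ s, 0 ≤ h k b) :
    ∑ b ∈ s, μ b * ∏ k ∈ J, h k b ≤ ∏ k ∈ J, (∑ b ∈ s, μ b * h k b ^ q) ^ (q : ℝ)⁻¹ := by
  set T : κ → ℝ := fun k => ∑ b ∈ s, μ b * h k b ^ q
  have hterm : ∀ k ∈ J, ∀ b ∈ s, 0 ≤ μ b * h k b ^ q :=
    fun k hk b hb => mul_nonneg (hμ0 b hb) (pow_nonneg (hh k hk b hb) _)
  have hT0 : ∀ k ∈ J, 0 ≤ T k := fun k hk => sum_nonneg (hterm k hk)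
  by_cases hzero : ∃ k ∈ J, T k = 0
  · obtain ⟨k₀, hk₀, hTk₀⟩ := hzero
    refine le_of_eq_of_le (sum_eq_zero fun b hb => ?_) (prod_nonneg fun k hk =>
      Real.rpow_nonneg (hT0 k hk) _)
    rcases mul_eq_zero.1 ((sum_eq_zero_iff_of_nonneg (hterm k₀ hk₀)).1 hTk₀ b hb) with h0 | h0
    · rw [h0, zero_mul]
    · have : h k₀ b = 0 := (pow_eq_zero_iff hq.ne').1 h0
      rw [prod_eq_zero hk₀ this, mul_zero]
  push Not at hzero
  have hTpos : ∀ k ∈ J, 0 < T k := fun k hk => (hT0 k hk).lt_of_ne' (hzero k hk)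
  set P := ∏ k ∈ J, T k ^ (q : ℝ)⁻¹
  set W := (#J : ℝ) * (q : ℝ)⁻¹
  set X := fun b => ∑ k ∈ J, (q : ℝ)⁻¹ * (h k b ^ q / T k)
  have hmean : ∑ b ∈ s, μ b * X b = W := by
    simp only [X, W, mul_sum]
    rw [sum_comm, ← nsmul_eq_mul, ← sum_const]
    refine sum_congr rfl fun k hk => ?_
    calc ∑ b ∈ s, μ b * ((q : ℝ)⁻¹ * (h k b ^ q / T k)) = (q : ℝ)⁻¹ / T k * T k := by
          simp only [T, mul_sum]; exact sum_congr rfl fun _ _ => by ring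
      _ = (q : ℝ)⁻¹ := div_mul_cancel₀ _ (hTpos k hk).ne'
  calc ∑ b ∈ s, μ b * ∏ k ∈ J, h k b
      ≤ ∑ b ∈ s, μ b * (P * ((1 - W) + X b)) := sum_le_sum fun b hb =>
        mul_le_mul_of_nonneg_left (prod_le_mul_one_sub_add_sum hq J hJ (h · b) T
          (fun k hk => hh k hk b hb) hTpos) (hμ0 b hb)
    _ = P * (1 - W) * ∑ b ∈ s, μ b + P * ∑ b ∈ s, μ b * X b := by
        rw [mul_sum, mul_sum, ← sum_add_distrib]
        exact sum_congr rfl fun _ _ => by ring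
    _ = P := by rw [hμ1, hmean]; ring

lemma two_point_holder {κ : Type*} [DecidableEq κ] {p : ℝ} (hp0 : 0 ≤ p) (hp1 : p ≤ 1)
    {q : ℕ} (hq : 0 < q) (𝔐 : Finset κ) (x y : κ → ℝ) (hx : ∀ k ∈ 𝔐, 0 ≤ x k)
    (hy : ∀ k ∈ 𝔐, 0 ≤ y k) (hxy : #{k ∈ 𝔐 | x k ≠ y k} ≤ q) :
    (1 - p) * ∏ k ∈ 𝔐, x k + p * ∏ k ∈ 𝔐, y k ≤
      ∏ k ∈ 𝔐, ((1 - p) * x k ^ q + p * y k ^ q) ^ (q : ℝ)⁻¹ := by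
  set J := {k ∈ 𝔐 | x k ≠ y k}
  have hJ : ∀ k ∈ J, k ∈ 𝔐 := fun k hk => (mem_filter.1 hk).1
  have hholder := sum_mul_prod_le_prod_Lq univ (fun b : Bool => if b then 1 - p else p)
    (fun b _ => by cases b <;> simp [hp0, hp1]) (by simp) hq J hxy
    (fun k b => if b then x k else y k)
    (fun k hk b _ => by cases b <;> simp [hx k (hJ k hk), hy k (hJ k hk)])
  simp only [Fintype.sum_bool, if_true, Bool.false_eq_true, if_false] at hholder
  have hconst : ∀ k ∈ {k ∈ 𝔐 | ¬ x k ≠ y k},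
      ((1 - p) * x k ^ q + p * y k ^ q) ^ (q : ℝ)⁻¹ = y k := fun k hk => by
    obtain ⟨hk, hxyk⟩ := mem_filter.1 hk
    rw [not_not.1 hxyk, ← add_mul, sub_add_cancel, one_mul,
      Real.pow_rpow_inv_natCast (hy k hk) hq.ne']
  have hcompl : ∏ k ∈ {k ∈ 𝔐 | ¬ x k ≠ y k}, x k = ∏ k ∈ {k ∈ 𝔐 | ¬ x k ≠ y k}, y k :=
    prod_congr rfl fun k hk => not_not.1 (mem_filter.1 hk).2
  rw [← prod_filter_mul_prod_filter_not 𝔐 (fun k => x k ≠ y k),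
    ← prod_filter_mul_prod_filter_not 𝔐 (fun k => x k ≠ y k) y,
    ← prod_filter_mul_prod_filter_not 𝔐 (fun k => x k ≠ y k), prod_congr rfl hconst, hcompl]
  have hrest : 0 ≤ ∏ k ∈ {k ∈ 𝔐 | ¬ x k ≠ y k}, y k :=
    prod_nonneg fun k hk => hy k (mem_filter.1 hk).1
  have := mul_le_mul_of_nonneg_right hholder hrest
  linarith

lemma one_le_rpow_neg_mul_prod_ite {κ : Type*} (𝔐 : Finset κ) (P : κ → Prop) [DecidablePred P]
    {θ u : ℝ} (hθ : 1 ≤ θ) (hu : u ≤ #{k ∈ 𝔐 | P k}) :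
    1 ≤ θ ^ (-u) * ∏ k ∈ 𝔐, if P k then θ else 1 := by
  rw [prod_ite, prod_const, prod_const, one_pow, mul_one, ← Real.rpow_natCast,
    ← Real.rpow_add (one_pos.trans_le hθ)]
  exact Real.one_le_rpow hθ (by linarith)

section Finner

variable {α : Type*} [DecidableEq α] {p : ℝ}

def DependsOnlyOn (I S : Finset α) (g : Finset α → ℝ) : Prop := ∀ A ⊆ I, g (A ∩ S) = g A

namespace DependsOnlyOn

variable {a : α} {I S : Finset α} {g : Finset α → ℝ}

lemma erase (haI : a ∉ I) (h : DependsOnlyOn (insert a I) S g) :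
    DependsOnlyOn I (S.erase a) g := fun A hA => by
  rw [inter_erase, erase_eq_of_notMem fun h => haI (hA (mem_inter.1 h).1),
    h A (hA.trans (subset_insert a I))]

lemma insert_erase (h : DependsOnlyOn (insert a I) S g) :
    DependsOnlyOn I (S.erase a) (fun A => g (insert a A)) := fun A hA => by
  have hset : insert a (A ∩ S.erase a) ∩ S = insert a A ∩ S := by
    ext x
    by_cases hx : x = a <;> simp [hx]
  show g (insert a (A ∩ S.erase a)) = g (insert a A)
  rw [← h _ (insert_subset_insert a (inter_subset_left.trans hA)), hset,
    h _ (insert_subset_insert a hA)]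

lemma apply_insert (haS : a ∉ S) (h : DependsOnlyOn (insert a I) S g) {A : Finset α}
    (hA : A ⊆ I) : g (insert a A) = g A := by
  rw [← h _ (insert_subset_insert a hA), insert_inter_of_notMem haS,
    h A (hA.trans (subset_insert a I))]

end DependsOnlyOn

/-- Finner's generalized Hölder inequality for product measures. -/
theorem bernoulliExpect_prod_le {κ : Type*} [DecidableEq κ] (hp0 : 0 ≤ p) (hp1 : p ≤ 1)
    {q : ℕ} (hq : 0 < q) (𝔐 : Finset κ) (I : Finset α) (S : κ → Finset α)
    (hdeg : ∀ i, #{k ∈ 𝔐 | i ∈ S k} ≤ q) (f : κ → Finset α → ℝ) (hf : ∀ k ∈ 𝔐, ∀ A, 0 ≤ f k A)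
    (hdep : ∀ k ∈ 𝔐, DependsOnlyOn I (S k) (f k)) :
    bernoulliExpect p I (fun A => ∏ k ∈ 𝔐, f k A) ≤
      ∏ k ∈ 𝔐, bernoulliExpect p I (fun A => f k A ^ q) ^ (q : ℝ)⁻¹ := by
  induction I using Finset.induction_on generalizing S f with
  | empty =>
    simp only [bernoulliExpect_empty]
    exact (prod_congr rfl fun k hk => Real.pow_rpow_inv_natCast (hf k hk ∅) hq.ne').ge
  | insert a I haI ih =>
    -- both slices `a ∉ A` and `a ∈ A` only see the coordinates `(S k).erase a` of `I`
    have hdeg' : ∀ i, #{k ∈ 𝔐 | i ∈ (S k).erase a} ≤ q := fun i =>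
      (card_le_card fun k => by simp only [mem_filter, mem_erase]; tauto).trans (hdeg i)
    have ih₀ := ih _ hdeg' f hf fun k hk => (hdep k hk).erase haI
    have ih₁ := ih _ hdeg' (fun k A => f k (insert a A)) (fun k hk A => hf k hk _)
      fun k hk => (hdep k hk).insert_erase
    set T₀ := fun k => bernoulliExpect p I (fun A => f k A ^ q)
    set T₁ := fun k => bernoulliExpect p I (fun A => f k (insert a A) ^ q)
    have hT₀ : ∀ k ∈ 𝔐, 0 ≤ T₀ k := fun k hk =>
      bernoulliExpect_nonneg hp0 hp1 fun A _ => pow_nonneg (hf k hk A) q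
    have hT₁ : ∀ k ∈ 𝔐, 0 ≤ T₁ k := fun k hk =>
      bernoulliExpect_nonneg hp0 hp1 fun A _ => pow_nonneg (hf k hk _) q
    -- only the `f k` with `a ∈ S k` see the new coordinate
    have hT : #{k ∈ 𝔐 | T₀ k ^ (q : ℝ)⁻¹ ≠ T₁ k ^ (q : ℝ)⁻¹} ≤ q := by
      refine (card_le_card fun k => ?_).trans (hdeg a)
      simp only [mem_filter]
      refine fun ⟨hk, hne⟩ => ⟨hk, by_contra fun haS => hne ?_⟩
      exact congrArg (· ^ (q : ℝ)⁻¹) (bernoulliExpect_congr fun A hA =>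
        by rw [(hdep k hk).apply_insert haS hA])
    calc bernoulliExpect p (insert a I) (fun A => ∏ k ∈ 𝔐, f k A)
        = (1 - p) * bernoulliExpect p I (fun A => ∏ k ∈ 𝔐, f k A)
          + p * bernoulliExpect p I (fun A => ∏ k ∈ 𝔐, f k (insert a A)) :=
          bernoulliExpect_insert haI _
      _ ≤ (1 - p) * ∏ k ∈ 𝔐, T₀ k ^ (q : ℝ)⁻¹ + p * ∏ k ∈ 𝔐, T₁ k ^ (q : ℝ)⁻¹ :=
          add_le_add (mul_le_mul_of_nonneg_left ih₀ (sub_nonneg.2 hp1))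
            (mul_le_mul_of_nonneg_left ih₁ hp0)
      _ ≤ ∏ k ∈ 𝔐, ((1 - p) * (T₀ k ^ (q : ℝ)⁻¹) ^ q + p * (T₁ k ^ (q : ℝ)⁻¹) ^ q) ^ (q : ℝ)⁻¹ :=
          two_point_holder hp0 hp1 hq 𝔐 _ _ (fun k hk => Real.rpow_nonneg (hT₀ k hk) _)
            (fun k hk => Real.rpow_nonneg (hT₁ k hk) _) hT
      _ = ∏ k ∈ 𝔐, bernoulliExpect p (insert a I) (fun A => f k A ^ q) ^ (q : ℝ)⁻¹ :=
          prod_congr rfl fun k hk => by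
            rw [Real.rpow_inv_natCast_pow (hT₀ k hk) hq.ne',
              Real.rpow_inv_natCast_pow (hT₁ k hk) hq.ne', bernoulliExpect_insert haI]

open Classical in
theorem bernoulliExpect_many_events_le {κ : Type*} [DecidableEq κ] (hp0 : 0 ≤ p) (hp1 : p ≤ 1)
    {q : ℕ} (hq : 0 < q) (𝔐 : Finset κ) (I : Finset α) (S : κ → Finset α)
    (hdeg : ∀ i, #{k ∈ 𝔐 | i ∈ S k} ≤ q) (P : κ → Set (Finset α))
    (hdep : ∀ k ∈ 𝔐, ∀ A ⊆ I, A ∩ S k ∈ P k ↔ A ∈ P k) {Q : ℝ} (hQ0 : 0 < Q) (hQ1 : Q ≤ 1)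
    (hP : ∀ k ∈ 𝔐, bernoulliExpect p I ((P k).indicator 1) ≤ Q) (u : ℝ) :
    bernoulliExpect p I ({A | u ≤ #{k ∈ 𝔐 | A ∈ P k}}.indicator 1) ≤
      Q ^ (u / q) * 2 ^ ((#𝔐 : ℝ) / q) := by
  -- Markov's inequality for `∏ k, θ ^ [A ∈ P k]`, bounded through Finner's inequality
  set θ := Q ^ (-(q : ℝ)⁻¹)
  have hθ1 : 1 ≤ θ := Real.one_le_rpow_of_pos_of_le_one_of_nonpos hQ0 hQ1 (by simp)
  have hθq : θ ^ q = Q⁻¹ := by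
    rw [← Real.rpow_natCast, ← Real.rpow_mul hQ0.le, neg_mul,
      inv_mul_cancel₀ (by exact_mod_cast hq.ne'), Real.rpow_neg_one]
  have hθu : θ ^ (-u) = Q ^ (u / q) := by
    rw [← Real.rpow_mul hQ0.le]
    congr 1
    ring
  set f : κ → Finset α → ℝ := fun k A => if A ∈ P k then θ else 1
  have hf : ∀ k ∈ 𝔐, ∀ A, 0 ≤ f k A := fun k _ A => by
    simp only [f]; split_ifs <;> positivity
  have hfq : ∀ k ∈ 𝔐, 0 ≤ bernoulliExpect p I (fun A => f k A ^ q) := fun k hk =>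
    bernoulliExpect_nonneg hp0 hp1 fun A _ => pow_nonneg (hf k hk A) q
  calc bernoulliExpect p I ({A | u ≤ #{k ∈ 𝔐 | A ∈ P k}}.indicator 1)
      ≤ bernoulliExpect p I (fun A => Q ^ (u / q) * ∏ k ∈ 𝔐, f k A) :=
        bernoulliExpect_mono hp0 hp1 fun A _ => by
          by_cases hA : u ≤ #{k ∈ 𝔐 | A ∈ P k}
          · rw [Set.indicator_of_mem (show A ∈ {A | u ≤ #{k ∈ 𝔐 | A ∈ P k}} from hA),
              Pi.one_apply, ← hθu]
            exact one_le_rpow_neg_mul_prod_ite 𝔐 (A ∈ P ·) hθ1 hA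
          · rw [Set.indicator_of_notMem (show A ∉ {A | u ≤ #{k ∈ 𝔐 | A ∈ P k}} from hA)]
            exact mul_nonneg (by positivity) (prod_nonneg fun k hk => hf k hk A)
    _ ≤ Q ^ (u / q) * ∏ k ∈ 𝔐, bernoulliExpect p I (fun A => f k A ^ q) ^ (q : ℝ)⁻¹ := by
        rw [bernoulliExpect_const_mul]
        gcongr
        exact bernoulliExpect_prod_le hp0 hp1 hq 𝔐 I S hdeg f hf fun k hk A hA => by
          simp only [f, hdep k hk A hA]
    _ ≤ Q ^ (u / q) * ∏ _k ∈ 𝔐, (2 : ℝ) ^ (q : ℝ)⁻¹ := by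
        refine mul_le_mul_of_nonneg_left (prod_le_prod (fun k hk => ?_) fun k hk => ?_)
          (by positivity)
        · exact Real.rpow_nonneg (hfq k hk) _
        · exact Real.rpow_le_rpow (hfq k hk)
            (bernoulliExpect_ite_pow_le_two hp0 hp1 hQ0 hθq (hP k hk)) (by positivity)
    _ = Q ^ (u / q) * 2 ^ ((#𝔐 : ℝ) / q) := by
        rw [prod_const, ← Real.rpow_natCast, ← Real.rpow_mul zero_le_two, inv_mul_eq_div]

end Finner

open Nat in
lemma pow_div_le_choose {t K n : ℕ} (htK : t ≤ K) (hn : 2 * K + 2 ≤ n) :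
    (n : ℝ) ^ t / (2 ^ t * K !) ≤ n.choose K := by
  have hhalf : (n : ℝ) / 2 ≤ (n + 1 - K : ℕ) := by
    rw [div_le_iff₀ two_pos]
    exact_mod_cast (by omega : n ≤ (n + 1 - K) * 2)
  have hone : (1 : ℝ) ≤ n / 2 := by
    rw [le_div_iff₀ two_pos]
    exact_mod_cast (by omega : 1 * 2 ≤ n)
  calc (n : ℝ) ^ t / (2 ^ t * K !) = (n / 2 : ℝ) ^ t / K ! := by rw [div_pow]; ring
    _ ≤ (n / 2 : ℝ) ^ K / K ! := by gcongr
    _ ≤ ((n + 1 - K : ℕ) : ℝ) ^ K / K ! := by gcongr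
    _ ≤ n.choose K := Nat.pow_le_choose K n

open Nat in
lemma pow_mul_choose_le {t m n : ℕ} (htm : t ≤ m) (hn : 2 * t + 2 ≤ n) :
    (n : ℝ) ^ t * (n - t).choose (m - t) ≤ 2 ^ t * t ! * m.choose t * n.choose m := by
  have hpow : (n : ℝ) ^ t ≤ n.choose t * (2 ^ t * t !) :=
    (div_le_iff₀ (by positivity)).1 (pow_div_le_choose le_rfl hn)
  have hmul : (n.choose m : ℝ) * m.choose t = n.choose t * (n - t).choose (m - t) := by
    exact_mod_cast Nat.choose_mul htm
  calc (n : ℝ) ^ t * (n - t).choose (m - t)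
      ≤ n.choose t * (2 ^ t * t !) * (n - t).choose (m - t) := by gcongr
    _ = 2 ^ t * t ! * m.choose t * n.choose m := by linear_combination (2 ^ t * t ! : ℝ) * hmul.symm

lemma choose_sub_le_choose_sub {t k m n : ℕ} (htk : t ≤ k) (hkm : k ≤ m) (hmn : m ≤ n) :
    (n - k).choose (m - k) ≤ (n - t).choose (m - t) := by
  rw [← Nat.choose_symm (by omega : m - k ≤ n - k), ← Nat.choose_symm (by omega : m - t ≤ n - t),
    show n - k - (m - k) = n - t - (m - t) by omega]
  exact Nat.choose_le_choose _ (by omega)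

lemma card_supersets_le {β : Type*} [Fintype β] [DecidableEq β] {t m : ℕ} {U : Finset β}
    (htU : t ≤ #U) (hm : m ≤ Fintype.card β) :
    #{M ∈ powersetCard m univ | U ⊆ M} ≤ (Fintype.card β - t).choose (m - t) := by
  by_cases hUm : #U ≤ m
  · calc #{M ∈ powersetCard m univ | U ⊆ M} ≤ #(powersetCard (m - #U) (univ \ U)) := by
          refine card_le_card_of_injOn (· \ U) (fun M hM => ?_) fun M hM M' hM' h => ?_
          · obtain ⟨hM, hUM⟩ := mem_filter.1 hM
            rw [mem_coe, mem_powersetCard, card_sdiff_of_subset hUM, (mem_powersetCard.1 hM).2]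
            exact ⟨sdiff_subset_sdiff (subset_univ M) subset_rfl, rfl⟩
          · rw [← sdiff_union_of_subset (mem_filter.1 hM).2,
              ← sdiff_union_of_subset (mem_filter.1 hM').2]
            exact congrArg (· ∪ U) h
      _ = (Fintype.card β - #U).choose (m - #U) := by
          rw [card_powersetCard, card_sdiff_of_subset (subset_univ U), card_univ]
      _ ≤ _ := choose_sub_le_choose_sub htU hUm hm
  · rw [filter_false_of_mem fun M hM hUM =>
      hUm ((card_le_card hUM).trans_eq (mem_powersetCard.1 hM).2)]
    exact Nat.zero_le _

lemma rpow_mul_two_rpow_eq {Q η N q K L : ℝ} (hQ : 0 < Q) (hq : q ≠ 0) (hK : K ≠ 0)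
    (hNK : N * K = L * q) :
    Q ^ ((1 - η) * N / q) * 2 ^ (N / q) =
      2 ^ ((1 / K - (1 - η) * (-Real.logb 2 Q / K)) * L) := by
  have hN : N / q = L / K := by rw [div_eq_div_iff hq hK]; linarith
  conv_lhs => rw [← Real.rpow_logb two_pos (by norm_num) hQ]
  rw [← Real.rpow_mul zero_le_two, ← Real.rpow_add two_pos, mul_div_assoc, hN]
  congr 1
  field_simp
  ring

lemma sub_le_choose {r : ℕ} (hr : 0 < r) (m : ℕ) : m - r ≤ m.choose r := by
  obtain ⟨s, rfl⟩ : ∃ s, r = s + 1 := ⟨r - 1, by omega⟩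
  induction m with
  | zero => simp
  | succ m ih =>
    rw [Nat.choose_succ_succ']
    rcases Nat.lt_or_ge m (s + 1) with h | h
    · omega
    · have := Nat.choose_pos (show s ≤ m by omega)
      omega

lemma tendsto_choose_atTop {r : ℕ} (hr : 0 < r) :
    Tendsto (fun m : ℕ => (m.choose r : ℝ)) atTop atTop :=
  tendsto_natCast_atTop_atTop.comp (tendsto_atTop_mono (sub_le_choose hr) (tendsto_sub_atTop_nat r))

section Hypergraph

variable {r n : ℕ} {Fam : ∀ k, Set (Finset (Finset (Fin k)))} {p : ℝ}

def IsCopyFreeOn (r n : ℕ) (Fam : ∀ k, Set (Finset (Finset (Fin k))))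
    (G : Finset (Finset (Fin n))) (M : Finset (Fin n)) : Prop :=
  ∀ U ⊆ M, ¬ HasCopyAt r n Fam G U

lemma prG_eq_bernoulliExpect (r n : ℕ) (p : ℝ) (A : Set (Finset (Finset (Fin n)))) :
    prG r n p A = bernoulliExpect p (edgeUniv r n) (A.indicator 1) :=
  sum_congr rfl fun E _ => by by_cases hE : E ∈ A <;> simp [hE, bernoulliWeight]

lemma prG_nonneg (hp0 : 0 ≤ p) (hp1 : p ≤ 1) (A : Set (Finset (Finset (Fin n)))) :
    0 ≤ prG r n p A := by
  rw [prG_eq_bernoulliExpect]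
  exact bernoulliExpect_nonneg hp0 hp1 fun G _ => Set.indicator_nonneg (fun _ _ => zero_le_one) G

lemma prG_le_one (hp0 : 0 ≤ p) (hp1 : p ≤ 1) (A : Set (Finset (Finset (Fin n)))) :
    prG r n p A ≤ 1 := by
  rw [prG_eq_bernoulliExpect, ← bernoulliExpect_const (p := p) (edgeUniv r n) 1]
  exact bernoulliExpect_mono hp0 hp1 fun G _ =>
    Set.indicator_le_self' (fun _ _ => zero_le_one) G

lemma prG_mono (hp0 : 0 ≤ p) (hp1 : p ≤ 1) {A B : Set (Finset (Finset (Fin n)))}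
    (hAB : ∀ G, IsRGraph r n G → G ∈ A → G ∈ B) : prG r n p A ≤ prG r n p B := by
  rw [prG_eq_bernoulliExpect, prG_eq_bernoulliExpect]
  refine bernoulliExpect_mono hp0 hp1 fun G hG => ?_
  by_cases hGA : G ∈ A
  · rw [Set.indicator_of_mem hGA, Set.indicator_of_mem (hAB G hG hGA)]
  · rw [Set.indicator_of_notMem hGA]
    exact Set.indicator_nonneg (fun _ _ => zero_le_one) G

lemma hasCopyAt_inter_powersetCard {G : Finset (Finset (Fin n))} {M U : Finset (Fin n)}
    (hU : U ⊆ M) : HasCopyAt r n Fam (G ∩ M.powersetCard r) U ↔ HasCopyAt r n Fam G U := by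
  refine exists_congr fun k => exists_congr fun H => and_congr_right fun _ => ?_
  refine exists_congr fun f => and_congr_right fun hf => forall₂_congr fun e he => ?_
  have hM : e.map f ∈ M.powersetCard r :=
    mem_powersetCard.2 ⟨(map_subset_map.2 (subset_univ e)).trans (hf ▸ hU), by simp [he]⟩
  simp [hM]

lemma isCopyFreeOn_inter_powersetCard {G : Finset (Finset (Fin n))} {M : Finset (Fin n)} :
    IsCopyFreeOn r n Fam (G ∩ M.powersetCard r) M ↔ IsCopyFreeOn r n Fam G M :=
  forall₂_congr fun _ hU => not_congr (hasCopyAt_inter_powersetCard hU)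

lemma hasCopyAt_map_iff {m : ℕ} (g : Fin m ↪ Fin n) (G : Finset (Finset (Fin m)))
    (U : Finset (Fin m)) :
    HasCopyAt r n Fam (G.map (mapEmbedding g).toEmbedding) (U.map g) ↔ HasCopyAt r m Fam G U := by
  have hmem : ∀ e : Finset (Fin m), e.map g ∈ G.map (mapEmbedding g).toEmbedding ↔ e ∈ G :=
    fun e => mem_map' (mapEmbedding g).toEmbedding
  refine exists_congr fun k => exists_congr fun H => and_congr_right fun _ => ⟨?_, ?_⟩
  · rintro ⟨f, hfU, hf⟩
    have hrange : ∀ x, ∃ y, g y = f x := fun x => by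
      obtain ⟨y, -, hy⟩ := mem_map.1 (hfU ▸ mem_map_of_mem f (mem_univ x))
      exact ⟨y, hy⟩
    choose f₀ hf₀ using hrange
    let e₀ : Fin k ↪ Fin m := ⟨f₀, fun x y hxy => f.injective (by rw [← hf₀, ← hf₀, hxy])⟩
    have hfe : f = e₀.trans g := by ext x; exact congrArg Fin.val (hf₀ x).symm
    rw [hfe] at hfU hf
    refine ⟨e₀, map_injective g (by rwa [Finset.map_map]), fun e he => ?_⟩
    rw [hf e he, ← Finset.map_map, hmem]
  · rintro ⟨f, hfU, hf⟩
    refine ⟨f.trans g, by rw [← Finset.map_map, hfU], fun e he => ?_⟩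
    rw [hf e he, ← Finset.map_map, hmem]

lemma isCopyFreeOn_map_iff {m : ℕ} (g : Fin m ↪ Fin n) (G : Finset (Finset (Fin m))) :
    IsCopyFreeOn r n Fam (G.map (mapEmbedding g).toEmbedding) (univ.map g) ↔
      ∀ U, ¬ HasCopyAt r m Fam G U := by
  refine ⟨fun h U hU => h _ (map_subset_map.2 (subset_univ U)) ((hasCopyAt_map_iff g G U).2 hU),
    fun h U hU => ?_⟩
  obtain ⟨U', -, rfl⟩ := subset_map_iff.1 hU
  exact fun hc => h U' ((hasCopyAt_map_iff g G U').1 hc)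

/-- Only the edges inside `M` matter, and they form a copy of `G(m,p)`. -/
lemma bernoulliExpect_isCopyFreeOn {m : ℕ} {M : Finset (Fin n)} (hM : #M = m) :
    bernoulliExpect p (edgeUniv r n) ({G | IsCopyFreeOn r n Fam G M}.indicator 1) =
      prG r m p (ForbN r Fam m) := by
  classical
  set g := (M.orderEmbOfFin hM).toEmbedding
  have hgM : univ.map g = M := map_orderEmbOfFin_univ M hM
  have hMr : M.powersetCard r = (edgeUniv r m).map (mapEmbedding g).toEmbedding := by
    rw [← hgM, powersetCard_map]
    rfl
  calc bernoulliExpect p (edgeUniv r n) ({G | IsCopyFreeOn r n Fam G M}.indicator 1)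
      = bernoulliExpect p (edgeUniv r n)
          (fun G => {G | IsCopyFreeOn r n Fam G M}.indicator 1 (G ∩ M.powersetCard r)) :=
        bernoulliExpect_congr fun G _ => by
          simp only [Set.indicator_apply, Set.mem_ofPred_eq, isCopyFreeOn_inter_powersetCard,
            Pi.one_apply]
    _ = bernoulliExpect p (M.powersetCard r) ({G | IsCopyFreeOn r n Fam G M}.indicator 1) :=
        bernoulliExpect_comp_inter (powersetCard_mono (subset_univ M)) _
    _ = bernoulliExpect p (edgeUniv r m) (fun G =>
          {G | IsCopyFreeOn r n Fam G M}.indicator 1 (G.map (mapEmbedding g).toEmbedding)) := by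
        rw [hMr, bernoulliExpect_map]
    _ = bernoulliExpect p (edgeUniv r m) ((ForbN r Fam m).indicator 1) :=
        bernoulliExpect_congr fun G hG => by
          have hiff : IsCopyFreeOn r n Fam (G.map (mapEmbedding g).toEmbedding) M ↔
              G ∈ ForbN r Fam m := by
            rw [← hgM, isCopyFreeOn_map_iff]
            exact ⟨fun h => ⟨hG, h⟩, fun h => h.2⟩
          simp only [Set.indicator_apply, Set.mem_ofPred_eq, hiff, Pi.one_apply]
    _ = prG r m p (ForbN r Fam m) := (prG_eq_bernoulliExpect r m p _).symm

lemma le_card_of_hasCopyAt {t : ℕ} (hFam : ∀ k, ∀ H ∈ Fam k, t ≤ k)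
    {G : Finset (Finset (Fin n))} {U : Finset (Fin n)} (h : HasCopyAt r n Fam G U) : t ≤ #U := by
  obtain ⟨k, H, hH, f, rfl, -⟩ := h
  simpa using hFam k H hH

open Classical in
lemma card_not_isCopyFreeOn_le {t m : ℕ} (hFam : ∀ k, ∀ H ∈ Fam k, t ≤ k) (hmn : m ≤ n)
    (G : Finset (Finset (Fin n))) :
    #{M ∈ powersetCard m univ | ¬ IsCopyFreeOn r n Fam G M} ≤
      {U | HasCopyAt r n Fam G U}.ncard * (n - t).choose (m - t) := by
  set C := (Set.toFinite {U | HasCopyAt r n Fam G U}).toFinset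
  calc #{M ∈ powersetCard m univ | ¬ IsCopyFreeOn r n Fam G M}
      ≤ #(C.biUnion fun U => {M ∈ powersetCard m univ | U ⊆ M}) := card_le_card fun M hM => by
        obtain ⟨hM, hbad⟩ := mem_filter.1 hM
        simp only [IsCopyFreeOn, not_forall, not_not] at hbad
        obtain ⟨U, hUM, hU⟩ := hbad
        exact mem_biUnion.2 ⟨U, by simpa [C] using hU, mem_filter.2 ⟨hM, hUM⟩⟩
    _ ≤ ∑ U ∈ C, #{M ∈ powersetCard m univ | U ⊆ M} := card_biUnion_le
    _ ≤ ∑ _U ∈ C, (n - t).choose (m - t) := sum_le_sum fun U hU => by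
        simpa using card_supersets_le (le_card_of_hasCopyAt hFam (by simpa [C] using hU))
          (by simpa using hmn)
    _ = _ := by rw [sum_const, smul_eq_mul, Set.ncard_eq_toFinset_card _ (Set.toFinite _)]

def FewCopies (r n t : ℕ) (Fam : ∀ k, Set (Finset (Finset (Fin k)))) (δ : ℝ) :
    Set (Finset (Finset (Fin n))) :=
  {G | ({U | HasCopyAt r n Fam G U}.ncard : ℝ) < δ * (n : ℝ) ^ t}

open Classical Nat in
lemma card_isCopyFreeOn_ge {t m : ℕ} (hFam : ∀ k, ∀ H ∈ Fam k, t ≤ k) (htm : t ≤ m)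
    (hmn : m ≤ n) (hn : 2 * t + 2 ≤ n) {η : ℝ} (hη : 0 ≤ η) {G : Finset (Finset (Fin n))}
    (hG : G ∈ FewCopies r n t Fam (η / (2 ^ t * t ! * m.choose t))) :
    (1 - η) * n.choose m ≤ #{M ∈ powersetCard m univ | IsCopyFreeOn r n Fam G M} := by
  have hmt : (m.choose t : ℝ) ≠ 0 := by exact_mod_cast (Nat.choose_pos htm).ne'
  have hbad : (#{M ∈ powersetCard m univ | ¬ IsCopyFreeOn r n Fam G M} : ℝ) ≤ η * n.choose m :=
    calc (#{M ∈ powersetCard m univ | ¬ IsCopyFreeOn r n Fam G M} : ℝ)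
        ≤ {U | HasCopyAt r n Fam G U}.ncard * ((n - t).choose (m - t) : ℝ) := by
          exact_mod_cast card_not_isCopyFreeOn_le hFam hmn G
      _ ≤ η / (2 ^ t * t ! * m.choose t) * (n ^ t * (n - t).choose (m - t)) := by
          rw [← mul_assoc]
          exact mul_le_mul_of_nonneg_right hG.le (Nat.cast_nonneg _)
      _ ≤ η / (2 ^ t * t ! * m.choose t) * (2 ^ t * t ! * m.choose t * n.choose m) :=
          mul_le_mul_of_nonneg_left (pow_mul_choose_le htm hn) (by positivity)
      _ = η * n.choose m := by field_simp
  have hsplit := card_filter_add_card_filter_not (s := powersetCard m (univ : Finset (Fin n)))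
    (p := IsCopyFreeOn r n Fam G)
  rw [card_powersetCard, Finset.card_univ, Fintype.card_fin] at hsplit
  have hsplit' : (#{M ∈ powersetCard m univ | IsCopyFreeOn r n Fam G M} : ℝ) +
      #{M ∈ powersetCard m univ | ¬ IsCopyFreeOn r n Fam G M} = n.choose m := by
    exact_mod_cast hsplit
  linarith

open Classical in
lemma prG_le_of_many_isCopyFreeOn (hp0 : 0 ≤ p) (hp1 : p ≤ 1) {m : ℕ} (hrm : r ≤ m)
    (hmn : m ≤ n) (hQ : 0 < prG r m p (ForbN r Fam m)) (u : ℝ) :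
    prG r n p {G | u ≤ #{M ∈ powersetCard m univ | IsCopyFreeOn r n Fam G M}} ≤
      prG r m p (ForbN r Fam m) ^ (u / (n - r).choose (m - r)) *
        2 ^ ((n.choose m : ℝ) / (n - r).choose (m - r)) := by
  have hdeg : ∀ e : Finset (Fin n),
      #{M ∈ powersetCard m univ | e ∈ M.powersetCard r} ≤ (n - r).choose (m - r) := fun e => by
    by_cases he : #e = r
    · refine (card_le_card fun M hM => ?_).trans
        (by simpa using card_supersets_le (m := m) he.ge (by simpa using hmn))
      simp only [mem_filter, mem_powersetCard] at hM ⊢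
      exact ⟨hM.1, hM.2.1⟩
    · rw [filter_false_of_mem fun M _ hM => he (mem_powersetCard.1 hM).2]
      exact Nat.zero_le _
  rw [prG_eq_bernoulliExpect]
  simpa using bernoulliExpect_many_events_le hp0 hp1 (Nat.choose_pos (by omega))
    (powersetCard m univ) (edgeUniv r n) (fun M => M.powersetCard r) hdeg
    (fun M => {G | IsCopyFreeOn r n Fam G M}) (fun M _ G _ => isCopyFreeOn_inter_powersetCard)
    hQ (prG_le_one hp0 hp1 _)
    (fun M hM => (bernoulliExpect_isCopyFreeOn (mem_powersetCard.1 hM).2).le) u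

lemma eventually_prG_forbN_le (hp0 : 0 ≤ p) (hp1 : p ≤ 1) {c ε : ℝ}
    (hc : Tendsto (fun n => -(Real.logb 2 (prG r n p (ForbN r Fam n))) / (n.choose r : ℝ))
      atTop (𝓝 c)) (hε : 0 < ε) :
    ∀ᶠ n in atTop, prG r n p (ForbN r Fam n) ≤ 2 ^ ((-c + ε) * (n.choose r : ℝ)) := by
  filter_upwards [hc.eventually (lt_mem_nhds (by linarith : c - ε < c)), eventually_ge_atTop r]
    with n hn hrn
  have hL : (0 : ℝ) < n.choose r := by exact_mod_cast Nat.choose_pos hrn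
  rcases (prG_nonneg hp0 hp1 (ForbN r Fam n)).eq_or_lt with hP | hP
  · rw [← hP]
    positivity
  · rw [← Real.rpow_logb two_pos (by norm_num) hP]
    refine Real.rpow_le_rpow_of_exponent_le one_le_two ?_
    rw [lt_div_iff₀ hL] at hn
    linarith

lemma hasCopyAt_zero_iff {G : Finset (Finset (Fin n))} {U : Finset (Fin n)} :
    HasCopyAt 0 n Fam G U ↔ ∃ H ∈ Fam #U, (∅ ∈ H ↔ ∅ ∈ G) := by
  constructor
  · rintro ⟨k, H, hH, f, rfl, hf⟩
    rw [card_map, Finset.card_univ, Fintype.card_fin]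
    exact ⟨H, hH, by simpa using hf ∅ card_empty⟩
  · rintro ⟨H, hH, hHG⟩
    refine ⟨#U, H, hH, (U.orderEmbOfFin rfl).toEmbedding, map_orderEmbOfFin_univ U rfl,
      fun e he => ?_⟩
    rw [card_eq_zero.1 he, map_empty]
    exact hHG

/-- For `r = 0` a copy only records whether the empty edge is present, so a member of `Fam` of
bounded size always witnesses it. -/
lemma exists_bound_of_hasCopyAt_zero (Fam : ∀ k, Set (Finset (Finset (Fin k)))) :
    ∃ K, ∀ n (G : Finset (Finset (Fin n))) U, HasCopyAt 0 n Fam G U →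
      ∃ k ≤ K, ∃ H ∈ Fam k, (∅ ∈ H ↔ ∅ ∈ G) := by
  have hwit : ∀ b : Prop, ∃ K, ∀ k, ∀ H ∈ Fam k, (∅ ∈ H ↔ b) →
      ∃ k' ≤ K, ∃ H' ∈ Fam k', (∅ ∈ H' ↔ b) := fun b => by
    by_cases h : ∃ k, ∃ H ∈ Fam k, (∅ ∈ H ↔ b)
    · obtain ⟨k, H, hH, hb⟩ := h
      exact ⟨k, fun _ _ _ _ => ⟨k, le_rfl, H, hH, hb⟩⟩
    · exact ⟨0, fun k H hH hb => (h ⟨k, H, hH, hb⟩).elim⟩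
  choose K hK using hwit
  refine ⟨max (K True) (K False), fun n G U hU => ?_⟩
  obtain ⟨H, hH, hHG⟩ := hasCopyAt_zero_iff.1 hU
  by_cases hG : ∅ ∈ G
  · obtain ⟨k, hk, H', hH', h'⟩ := hK True _ H hH (by simpa [hG] using hHG)
    exact ⟨k, hk.trans (le_max_left _ _), H', hH', by simpa [hG] using h'⟩
  · obtain ⟨k, hk, H', hH', h'⟩ := hK False _ H hH (by simpa [hG] using hHG)
    exact ⟨k, hk.trans (le_max_right _ _), H', hH', by simpa [hG] using h'⟩

open Nat in
lemma exists_prG_fewCopies_le_of_r_eq_zero {t : ℕ} (hFam : ∀ k, ∀ H ∈ Fam k, t ≤ k)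
    (hp0 : 0 ≤ p) (hp1 : p ≤ 1) {c ε : ℝ}
    (hc : Tendsto (fun n => -(Real.logb 2 (prG 0 n p (ForbN 0 Fam n))) / (n.choose 0 : ℝ))
      atTop (𝓝 c)) (hε : 0 < ε) :
    ∃ (n₀ : ℕ) (δ : ℝ), 0 < δ ∧ ∀ n, n₀ < n →
      prG 0 n p (FewCopies 0 n t Fam δ) ≤ 2 ^ ((-c + ε) * (n.choose 0 : ℝ)) := by
  obtain ⟨K, hK⟩ := exists_bound_of_hasCopyAt_zero Fam
  obtain ⟨n₁, hn₁⟩ := eventually_atTop.1 (eventually_prG_forbN_le hp0 hp1 hc hε)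
  refine ⟨max n₁ (2 * K + 2), 1 / (2 ^ t * K !), by positivity, fun n hn => ?_⟩
  refine (prG_mono (B := ForbN 0 Fam n) hp0 hp1 fun G hG hfew => ⟨hG, fun U hU => ?_⟩).trans
    (hn₁ n (by omega))
  obtain ⟨k, hkK, H, hH, hHG⟩ := hK n G U hU
  have hall : ↑(powersetCard k (univ : Finset (Fin n))) ⊆ {U | HasCopyAt 0 n Fam G U} :=
    fun U' hU' => hasCopyAt_zero_iff.2 (by rw [(mem_powersetCard.1 hU').2]; exact ⟨H, hH, hHG⟩)
  have hmany : (n.choose k : ℝ) ≤ {U | HasCopyAt 0 n Fam G U}.ncard := by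
    have := Set.ncard_le_ncard hall (Set.toFinite _)
    rw [Set.ncard_coe_finset, card_powersetCard, Finset.card_univ, Fintype.card_fin] at this
    exact_mod_cast this
  have hbound : 1 / (2 ^ t * K !) * (n : ℝ) ^ t ≤ n.choose k :=
    calc 1 / (2 ^ t * K !) * (n : ℝ) ^ t ≤ n ^ t / (2 ^ t * k !) := by
          rw [one_div_mul_eq_div]
          gcongr
      _ ≤ n.choose k := pow_div_le_choose (hFam k H hH) (by omega)
  exact (hbound.trans hmany).not_gt hfew

lemma exists_block_size (hr : 0 < r) (hp0 : 0 ≤ p) (hp1 : p ≤ 1) {c ε : ℝ}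
    (hc : Tendsto (fun n => -(Real.logb 2 (prG r n p (ForbN r Fam n))) / (n.choose r : ℝ))
      atTop (𝓝 c)) (hε : 0 < ε) (hcε : ε < c) (t : ℕ) :
    ∃ m, t ≤ m ∧ r ≤ m ∧ 1 / (m.choose r : ℝ) ≤ ε / 4 ∧
      |-(Real.logb 2 (prG r m p (ForbN r Fam m))) / m.choose r - c| < ε / 4 ∧
      0 < prG r m p (ForbN r Fam m) := by
  obtain ⟨m, ⟨⟨hcm, hKm⟩, htm⟩, hrm⟩ :=
    (((hc.eventually (Metric.ball_mem_nhds c (by positivity : 0 < ε / 4))).and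
      ((tendsto_choose_atTop hr).eventually_ge_atTop (4 / ε))).and
      (eventually_ge_atTop t)).and (eventually_ge_atTop r) |>.exists
  rw [Real.dist_eq] at hcm
  refine ⟨m, htm, hrm, ?_, hcm, (prG_nonneg hp0 hp1 _).lt_of_ne fun hQ0 => ?_⟩
  · rw [div_le_iff₀ (by exact_mod_cast Nat.choose_pos hrm)]
    rw [div_le_iff₀ hε] at hKm
    linarith
  · rw [← hQ0, Real.logb_zero, neg_zero, zero_div, zero_sub, abs_neg, abs_lt] at hcm
    linarith [hcm.2]

open Classical Nat in
lemma exists_prG_fewCopies_le {t : ℕ} (hr : 0 < r) (hFam : ∀ k, ∀ H ∈ Fam k, t ≤ k)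
    (hp0 : 0 ≤ p) (hp1 : p ≤ 1) {c ε : ℝ}
    (hc : Tendsto (fun n => -(Real.logb 2 (prG r n p (ForbN r Fam n))) / (n.choose r : ℝ))
      atTop (𝓝 c)) (hε : 0 < ε) (hcε : ε < c) :
    ∃ (n₀ : ℕ) (δ : ℝ), 0 < δ ∧ ∀ n, n₀ < n →
      prG r n p (FewCopies r n t Fam δ) ≤ 2 ^ ((-c + ε) * (n.choose r : ℝ)) := by
  obtain ⟨m, htm, hrm, hKε, hcm, hQ⟩ := exists_block_size hr hp0 hp1 hc hε hcε t
  set Q := prG r m p (ForbN r Fam m)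
  set cm := -Real.logb 2 Q / m.choose r
  rw [abs_lt] at hcm
  have hcε' : 0 < c + ε := by linarith
  set η := ε / (4 * (c + ε))
  have hη : 0 < η := by positivity
  have hηc : η * (c + ε) = ε / 4 := by simp only [η]; field_simp
  have hδ : 0 < η / (2 ^ t * t ! * m.choose t) := by
    have := Nat.choose_pos htm
    positivity
  refine ⟨max m (2 * t + 2), _, hδ, fun n hn => ?_⟩
  have hmn : m ≤ n := by omega
  calc prG r n p (FewCopies r n t Fam (η / (2 ^ t * t ! * m.choose t)))
      ≤ prG r n p {G | (1 - η) * n.choose m ≤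
          #{M ∈ powersetCard m univ | IsCopyFreeOn r n Fam G M}} :=
        prG_mono hp0 hp1 fun G _ hG => card_isCopyFreeOn_ge hFam htm hmn (by omega) hη.le hG
    _ ≤ Q ^ ((1 - η) * n.choose m / (n - r).choose (m - r)) *
          2 ^ ((n.choose m : ℝ) / (n - r).choose (m - r)) :=
        prG_le_of_many_isCopyFreeOn hp0 hp1 hrm hmn hQ _
    _ = 2 ^ ((1 / m.choose r - (1 - η) * cm) * n.choose r) :=
        rpow_mul_two_rpow_eq hQ (by exact_mod_cast (Nat.choose_pos (by omega)).ne')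
          (by exact_mod_cast (Nat.choose_pos hrm).ne') (by exact_mod_cast Nat.choose_mul hrm)
    _ ≤ 2 ^ ((-c + ε) * n.choose r) := by
        refine Real.rpow_le_rpow_of_exponent_le one_le_two
          (mul_le_mul_of_nonneg_right ?_ (Nat.cast_nonneg _))
        nlinarith [mul_le_mul_of_nonneg_left (by linarith : cm ≤ c + ε) hη.le]

end Hypergraph

end Supersaturation

/-- **Supersaturation, probabilistic form.** With `c = c(p,Fam)` as above, for every
`ε > 0` there are `n₀` and `δ > 0` such that for `n > n₀` the probability that `G(n,p)`
contains fewer than `δ n^t` induced subgraphs lying in `Fam` is at most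
`2 ^ ((-c+ε) C(n,r))`. -/
theorem stmt_3 (r t : ℕ) (Fam : ∀ k, Set (Finset (Finset (Fin k))))
    (hFam : ∀ k, ∀ H ∈ Fam k, IsRGraph r k H ∧ t ≤ k)
    (p : ℝ) (hp0 : 0 < p) (hp1 : p < 1) (c : ℝ)
    (hc : Filter.Tendsto
      (fun n => -(Real.logb 2 (prG r n p (ForbN r Fam n))) / (n.choose r : ℝ))
      Filter.atTop (nhds c))
    (ε : ℝ) (hε : 0 < ε) :
    ∃ (n₀ : ℕ) (δ : ℝ), 0 < δ ∧ ∀ n, n₀ < n →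
      prG r n p {G : Finset (Finset (Fin n)) |
          (Set.ncard {U : Finset (Fin n) | HasCopyAt r n Fam G U} : ℝ) < δ * (n : ℝ) ^ t} ≤
        2 ^ ((-c + ε) * (n.choose r : ℝ)) := by
  have hsize : ∀ k, ∀ H ∈ Fam k, t ≤ k := fun k H hH => (hFam k H hH).2
  rcases le_or_gt c ε with hcε | hcε
  · refine ⟨0, 1, one_pos, fun n _ => (Supersaturation.prG_le_one hp0.le hp1.le _).trans ?_⟩
    exact Real.one_le_rpow one_le_two (mul_nonneg (by linarith) (Nat.cast_nonneg _))
  rcases Nat.eq_zero_or_pos r with rfl | hr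
  · exact Supersaturation.exists_prG_fewCopies_le_of_r_eq_zero hsize hp0.le hp1.le hc hε
  · exact Supersaturation.exists_prG_fewCopies_le hr hsize hp0.le hp1.le hc hε hcε
end

section
/- Let F be a 2-graph and let ε > 0. Then there exist n₀ and δ > 0 (depending only on ε and F) such that for any vertex set V of size n = |V| > n₀, if G = (V,E) is a graph with |E| ≥ ex*(n,F) + ε·C(n,2) edges, then for every set of edges E₀ ⊆ V^(2) \ E there exists a subset X ⊆ E such that the graph (V, E₀ ∪ X) contains at least δ·n^{|F|} induced copies of F, i.e., at least δ·n^{|F|} vertex subsets U such that the induced subgraph of (V, E₀ ∪ X) on U is isomorphic to F. -/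
/-
Fix `m` with `ex*(m,F)/C(m,2)` within `ε/2` of the infimum of these densities. Double counting edges
over the `m`-subsets `W` of the `n` vertices shows that a proportion `ε/2` of them span more than
`ex*(m,F)` edges of `E`; inside each such `W` some `X_W` ⊆ `E[W]` produces an induced copy `U_W ⊆ W`
of `F` in `E₀ ∪ X_W`. A uniformly random `X ⊆ E` agrees with `X_W` on `E[W]` with probability at
least `2^(-C(m,2))`, so some `X` agrees with a `2^(-C(m,2))` proportion of them. Each copy `U` lies
in at most `C(n-v,m-v)` sets `W`, which leaves `Ω(C(n,v)) = Ω(n^v)` distinct copies.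
-/

open Finset

/-- `ex*(n,F)`: the maximum of `|E|` over pairs of edge-disjoint graphs `E`, `E₀` on `n`
vertices such that no graph `(V, E₀ ∪ X)` with `X ⊆ E` contains an induced copy of `F`. -/
noncomputable def exStar (v : ℕ) (F : Finset (Finset (Fin v))) (n : ℕ) : ℕ :=
  sSup {k : ℕ | ∃ E E₀ : Finset (Finset (Fin n)), IsRGraph 2 n E ∧ IsRGraph 2 n E₀ ∧
    Disjoint E E₀ ∧
    (∀ X ⊆ E, ∀ U : Finset (Fin n), ¬ IsInducedCopyAt 2 v n F (E₀ ∪ X) U) ∧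
    k = E.card}

section Counting

variable {α : Type*} [DecidableEq α]

lemma card_filter_powerset_inter_eq {E A B : Finset α} (hA : A ⊆ E) (hB : B ⊆ A) :
    #{X ∈ E.powerset | X ∩ A = B} = 2 ^ #(E \ A) := by
  have hdisj : ∀ Y ∈ (E \ A).powerset, Disjoint Y B := fun Y hY =>
    disjoint_of_subset_left (mem_powerset.1 hY)
      (disjoint_of_subset_right hB disjoint_sdiff_self_left)
  have himage : {X ∈ E.powerset | X ∩ A = B} = (E \ A).powerset.image (· ∪ B) := by
    ext X
    simp only [mem_filter, mem_powerset, mem_image]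
    constructor
    · rintro ⟨hXE, rfl⟩
      exact ⟨X \ A, sdiff_subset_sdiff hXE le_rfl, sdiff_union_inter X A⟩
    · rintro ⟨Y, hY, rfl⟩
      refine ⟨union_subset (hY.trans sdiff_subset) (hB.trans hA), ?_⟩
      rw [union_inter_distrib_right, inter_eq_left.2 hB,
        disjoint_iff_inter_eq_empty.1 (disjoint_of_subset_left hY disjoint_sdiff_self_left),
        empty_union]
  have hinj : Set.InjOn (· ∪ B) (E \ A).powerset := fun Y₁ h₁ Y₂ h₂ h => by
    rw [← union_sdiff_cancel_right (hdisj Y₁ h₁), ← union_sdiff_cancel_right (hdisj Y₂ h₂)]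
    exact congrArg (· \ B) h
  rw [himage, card_image_of_injOn hinj, card_powerset]

/-- A uniformly random `X ⊆ E` satisfies `X ∩ A i = B i` with probability `2 ^ (-#(A i))`. -/
lemma exists_subset_card_le_card_filter_inter_eq {ι : Type*} {E : Finset α} {S : Finset ι}
    {A B : ι → Finset α} {K : ℕ} (hA : ∀ i ∈ S, A i ⊆ E ∧ #(A i) ≤ K)
    (hB : ∀ i ∈ S, B i ⊆ A i) :
    ∃ X ⊆ E, #S ≤ #{i ∈ S | X ∩ A i = B i} * 2 ^ K := by
  have hswap : ∑ X ∈ E.powerset, #{i ∈ S | X ∩ A i = B i}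
      = ∑ i ∈ S, #{X ∈ E.powerset | X ∩ A i = B i} :=
    sum_card_bipartiteAbove_eq_sum_card_bipartiteBelow (fun X i => X ∩ A i = B i)
  have hterm : ∀ i ∈ S, 2 ^ #E ≤ #{X ∈ E.powerset | X ∩ A i = B i} * 2 ^ K := by
    intro i hi
    obtain ⟨hAE, hAK⟩ := hA i hi
    rw [card_filter_powerset_inter_eq hAE (hB i hi), card_sdiff_of_subset hAE, ← pow_add]
    exact Nat.pow_le_pow_right two_pos (by have := card_le_card hAE; omega)
  obtain ⟨X, hX, hle⟩ := exists_le_of_sum_le (powerset_nonempty E)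
    (f := fun _ => #S) (g := fun X => #{i ∈ S | X ∩ A i = B i} * 2 ^ K) <| by
      calc ∑ _X ∈ E.powerset, #S = ∑ _i ∈ S, 2 ^ #E := by simp [mul_comm]
        _ ≤ ∑ i ∈ S, #{X ∈ E.powerset | X ∩ A i = B i} * 2 ^ K := sum_le_sum hterm
        _ = _ := by rw [← sum_mul, ← hswap, sum_mul]
  exact ⟨X, mem_powerset.1 hX, hle⟩

variable [Fintype α]

lemma sum_card_filter_subset_powersetCard {E : Finset (Finset α)} {r m : ℕ}
    (hE : ∀ e ∈ E, #e = r) (hrm : r ≤ m) :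
    ∑ W ∈ powersetCard m univ, #{e ∈ E | e ⊆ W} = #E * (Fintype.card α - r).choose (m - r) := by
  calc ∑ W ∈ powersetCard m univ, #{e ∈ E | e ⊆ W}
      = ∑ e ∈ E, #{W ∈ powersetCard m univ | e ⊆ W} :=
        (sum_card_bipartiteAbove_eq_sum_card_bipartiteBelow _).symm
    _ = #E * (Fintype.card α - r).choose (m - r) := by
        refine sum_const_nat fun e he => ?_
        rw [card_filter_powersetCard_subset e univ m (subset_univ e) (hE e he ▸ hrm), card_univ,
          hE e he]

lemma card_le_choose_mul_card_image {T : Finset (Finset α)} {U : Finset α → Finset α} {m v : ℕ}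
    (hT : ∀ W ∈ T, #W = m) (hUW : ∀ W ∈ T, U W ⊆ W) (hU : ∀ W ∈ T, #(U W) = v) (hvm : v ≤ m) :
    #T ≤ (Fintype.card α - v).choose (m - v) * #(T.image U) := by
  refine card_le_mul_card_image T _ fun U₀ hU₀ => ?_
  obtain ⟨W₀, hW₀, rfl⟩ := mem_image.1 hU₀
  calc #{W ∈ T | U W = U W₀} ≤ #{W ∈ powersetCard m univ | U W₀ ⊆ W} := by
        refine card_le_card fun W hW => ?_
        obtain ⟨hWT, hWU⟩ := mem_filter.1 hW
        exact mem_filter.2 ⟨mem_powersetCard_univ.2 (hT W hWT), hWU ▸ hUW W hWT⟩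
    _ = _ := by
        rw [card_filter_powersetCard_subset _ _ _ (subset_univ _) (hU W₀ hW₀ ▸ hvm), card_univ,
          hU W₀ hW₀]

end Counting

lemma pow_le_two_pow_mul_factorial_mul_choose {n v : ℕ} (h : 2 * v ≤ n) :
    (n : ℝ) ^ v ≤ 2 ^ v * v.factorial * n.choose v := by
  have hbase : n ≤ 2 * (n + 1 - v) := by omega
  have hchoose := Nat.pow_le_choose (α := ℝ) v n
  rw [div_le_iff₀ (by positivity)] at hchoose
  calc (n : ℝ) ^ v ≤ (2 * (n + 1 - v : ℕ) : ℝ) ^ v := by gcongr; exact_mod_cast hbase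
    _ = 2 ^ v * ((n + 1 - v : ℕ) : ℝ) ^ v := mul_pow _ _ _
    _ ≤ 2 ^ v * v.factorial * n.choose v := by rw [mul_assoc]; gcongr; linarith

lemma div_mul_pow_le_of_mul_choose_le {n m v N : ℕ} {η K : ℝ} (hη : 0 ≤ η) (hK : 0 < K)
    (hvm : v ≤ m) (hmn : m ≤ n) (h2v : 2 * v ≤ n)
    (h : η * n.choose m ≤ K * (n - v).choose (m - v) * N) :
    η / (K * m.choose v * v.factorial * 2 ^ v) * n ^ v ≤ N := by
  have hid : (n.choose m * m.choose v : ℝ) = n.choose v * (n - v).choose (m - v) := by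
    exact_mod_cast Nat.choose_mul hvm
  have hfib : (0 : ℝ) < (n - v).choose (m - v) := by exact_mod_cast Nat.choose_pos (by omega)
  have hmv : (0 : ℝ) < m.choose v := by exact_mod_cast Nat.choose_pos hvm
  have hcopies : η * n.choose v ≤ K * m.choose v * N := by
    refine le_of_mul_le_mul_right ?_ hfib
    calc η * n.choose v * (n - v).choose (m - v) = η * n.choose m * m.choose v := by
          rw [mul_assoc, ← hid, mul_assoc]
      _ ≤ K * (n - v).choose (m - v) * N * m.choose v := by gcongr
      _ = K * m.choose v * N * (n - v).choose (m - v) := by ring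
  calc η / (K * m.choose v * v.factorial * 2 ^ v) * n ^ v
      ≤ η / (K * m.choose v * v.factorial * 2 ^ v) * (2 ^ v * v.factorial * n.choose v) := by
        gcongr
        exact pow_le_two_pow_mul_factorial_mul_choose h2v
    _ = η * n.choose v / (K * m.choose v) := by field_simp
    _ ≤ N := by
        rw [div_le_iff₀ (mul_pos hK hmv)]
        linarith

lemma exists_forall_lt_add {d : ℕ → ℝ} (hd : BddBelow (Set.range d)) (k : ℕ) {η : ℝ}
    (hη : 0 < η) : ∃ m ≥ k, ∀ n ≥ k, d m < d n + η := by
  obtain ⟨_, ⟨m, hm, rfl⟩, hlt⟩ := Real.lt_sInf_add_pos ((Set.nonempty_Ici (a := k)).image d) hη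
  refine ⟨m, hm, fun n hn => hlt.trans_le ?_⟩
  gcongr
  exact csInf_le (hd.mono (Set.image_subset_range d _)) ⟨n, hn, rfl⟩

lemma card_filter_subset_le_choose {r n : ℕ} {E : Finset (Finset (Fin n))} (hE : IsRGraph r n E)
    (W : Finset (Fin n)) : #{e ∈ E | e ⊆ W} ≤ (#W).choose r := by
  rw [← card_powersetCard]
  refine card_le_card fun e he => ?_
  obtain ⟨heE, heW⟩ := mem_filter.1 he
  exact mem_powersetCard.2 ⟨heW, (mem_powersetCard.1 (hE heE)).2⟩

lemma IsInducedCopyAt.card_eq {r k n : ℕ} {F : Finset (Finset (Fin k))}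
    {G : Finset (Finset (Fin n))} {U : Finset (Fin n)} (h : IsInducedCopyAt r k n F G U) :
    #U = k := by
  obtain ⟨f, rfl, -⟩ := h
  simp

lemma IsInducedCopyAt.congr {r k n : ℕ} {F : Finset (Finset (Fin k))}
    {G H : Finset (Finset (Fin n))} {U : Finset (Fin n)} (hGH : ∀ e ⊆ U, e ∈ G ↔ e ∈ H)
    (h : IsInducedCopyAt r k n F G U) : IsInducedCopyAt r k n F H U := by
  obtain ⟨f, rfl, hf⟩ := h
  exact ⟨f, rfl, fun e he => (hf e he).trans (hGH _ (map_subset_map.2 (subset_univ e)))⟩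

lemma IsInducedCopyAt.map {r k m n : ℕ} {F : Finset (Finset (Fin k))}
    {H : Finset (Finset (Fin m))} {G : Finset (Finset (Fin n))} {U : Finset (Fin m)}
    (g : Fin m ↪ Fin n) (hHG : ∀ e : Finset (Fin m), #e = r → (e ∈ H ↔ e.map g ∈ G))
    (h : IsInducedCopyAt r k m F H U) : IsInducedCopyAt r k n F G (U.map g) := by
  obtain ⟨f, rfl, hf⟩ := h
  refine ⟨f.trans g, by rw [map_map], fun e he => ?_⟩
  rw [hf e he, hHG _ (by rwa [card_map]), map_map]

def comapGraph (r : ℕ) {m n : ℕ} (g : Fin m ↪ Fin n) (G : Finset (Finset (Fin n))) :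
    Finset (Finset (Fin m)) :=
  {e ∈ edgeUniv r m | e.map g ∈ G}

section comapGraph

variable {r m n : ℕ} (g : Fin m ↪ Fin n)

lemma comapGraph_isRGraph (G : Finset (Finset (Fin n))) : IsRGraph r m (comapGraph r g G) :=
  filter_subset _ _

lemma mem_comapGraph {G : Finset (Finset (Fin n))} {e : Finset (Fin m)} :
    e ∈ comapGraph r g G ↔ #e = r ∧ e.map g ∈ G := by
  simp [comapGraph, edgeUniv]

lemma disjoint_comapGraph {G H : Finset (Finset (Fin n))} (h : Disjoint G H) :
    Disjoint (comapGraph r g G) (comapGraph r g H) :=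
  disjoint_left.2 fun _ hG hH =>
    disjoint_left.1 h (mem_comapGraph g |>.1 hG).2 (mem_comapGraph g |>.1 hH).2

lemma card_comapGraph {G : Finset (Finset (Fin n))} (hG : IsRGraph r n G) :
    #(comapGraph r g G) = #{e ∈ G | e ⊆ univ.map g} := by
  rw [← card_map (mapEmbedding g).toEmbedding]
  congr 1
  ext e
  simp only [mem_map, mem_filter, mem_comapGraph, RelEmbedding.coe_toEmbedding, mapEmbedding_apply]
  constructor
  · rintro ⟨a, ⟨-, ha⟩, rfl⟩
    exact ⟨ha, map_subset_map.2 (subset_univ a)⟩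
  · rintro ⟨he, hsub⟩
    obtain ⟨a, -, rfl⟩ := subset_map_iff.1 hsub
    have := (mem_powersetCard.1 (hG he)).2
    exact ⟨a, ⟨by rwa [card_map] at this, he⟩, rfl⟩

end comapGraph

def richSets {n : ℕ} (E : Finset (Finset (Fin n))) (m a : ℕ) : Finset (Finset (Fin n)) :=
  {W ∈ powersetCard m univ | a < #{e ∈ E | e ⊆ W}}

lemma mul_choose_le_card_richSets {n m a : ℕ} {η : ℝ} {E : Finset (Finset (Fin n))}
    (hE : IsRGraph 2 n E) (h2m : 2 ≤ m) (hmn : m ≤ n)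
    (h : (a : ℝ) / m.choose 2 + η ≤ #E / n.choose 2) :
    η * n.choose m ≤ #(richSets E m a) := by
  set P := powersetCard m (univ : Finset (Fin n))
  have hedges : ∀ e ∈ E, #e = 2 := fun e he => (mem_powersetCard.1 (hE he)).2
  have hsum : #E * (n - 2).choose (m - 2) ≤ #(richSets E m a) * m.choose 2 + n.choose m * a := by
    have hdouble := sum_card_filter_subset_powersetCard hedges h2m
    rw [Fintype.card_fin] at hdouble
    rw [← hdouble, ← sum_filter_add_sum_filter_not P (fun W => a < #{e ∈ E | e ⊆ W})]
    gcongr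
    · refine sum_le_card_nsmul _ _ _ fun W hW => ?_
      have := card_filter_subset_le_choose hE W
      rwa [mem_powersetCard_univ.1 (mem_filter.1 hW).1] at this
    · refine (sum_le_card_nsmul _ _ a fun W hW => not_lt.1 (mem_filter.1 hW).2).trans ?_
      rw [smul_eq_mul]
      gcongr
      exact (card_filter_le _ _).trans_eq (by simp [P])
  have hid : (n.choose m * m.choose 2 : ℝ) = n.choose 2 * (n - 2).choose (m - 2) := by
    exact_mod_cast Nat.choose_mul h2m
  have hm2 : (0 : ℝ) < m.choose 2 := by exact_mod_cast Nat.choose_pos h2m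
  have hn2 : (0 : ℝ) < n.choose 2 := by exact_mod_cast Nat.choose_pos (h2m.trans hmn)
  rw [div_add' _ _ _ hm2.ne', div_le_div_iff₀ hm2 hn2] at h
  have hsumR : (#E * (n - 2).choose (m - 2) : ℝ)
      ≤ #(richSets E m a) * m.choose 2 + n.choose m * a := by exact_mod_cast hsum
  have hcleared : (a + η * m.choose 2) * (n.choose m * m.choose 2 : ℝ)
      ≤ (#(richSets E m a) * m.choose 2 + n.choose m * a) * m.choose 2 :=
    calc (a + η * m.choose 2) * (n.choose m * m.choose 2 : ℝ)
        = (a + η * m.choose 2) * n.choose 2 * (n - 2).choose (m - 2) := by rw [hid, mul_assoc]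
      _ ≤ #E * m.choose 2 * (n - 2).choose (m - 2) := by gcongr
      _ = #E * (n - 2).choose (m - 2) * m.choose 2 := by ring
      _ ≤ _ := by gcongr
  have hcancel : (a + η * m.choose 2) * (n.choose m : ℝ)
      ≤ #(richSets E m a) * m.choose 2 + n.choose m * a :=
    le_of_mul_le_mul_right (by linarith) hm2
  exact le_of_mul_le_mul_right (a := (m.choose 2 : ℝ)) (by linarith) hm2

section ExStar

variable {v : ℕ} {F : Finset (Finset (Fin v))}

lemma exists_inducedCopyAt_of_exStar_lt {n : ℕ} {E E₀ : Finset (Finset (Fin n))}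
    (hE : IsRGraph 2 n E) (hE₀ : IsRGraph 2 n E₀) (hd : Disjoint E E₀)
    (h : exStar v F n < #E) : ∃ X ⊆ E, ∃ U, IsInducedCopyAt 2 v n F (E₀ ∪ X) U := by
  by_contra! hfree
  refine h.not_ge (le_csSup ⟨n.choose 2, ?_⟩ ⟨E, E₀, hE, hE₀, hd, hfree, rfl⟩)
  rintro _ ⟨E', -, hE', -, -, -, rfl⟩
  simpa [edgeUniv] using card_le_card hE'

lemma exists_inducedCopyAt_subset {n : ℕ} {E E₀ : Finset (Finset (Fin n))}
    (hE : IsRGraph 2 n E) (hd : Disjoint E E₀) {W : Finset (Fin n)}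
    (h : exStar v F #W < #{e ∈ E | e ⊆ W}) :
    ∃ Y ⊆ {e ∈ E | e ⊆ W}, ∃ U ⊆ W, IsInducedCopyAt 2 v n F (E₀ ∪ Y) U := by
  set g := (W.orderEmbOfFin rfl).toEmbedding
  have hg : univ.map g = W := map_orderEmbOfFin_univ W rfl
  have hsub : ∀ a : Finset (Fin #W), a.map g ⊆ W := fun a x hx => by
    obtain ⟨i, -, rfl⟩ := mem_map.1 hx
    exact W.orderEmbOfFin_mem rfl i
  obtain ⟨Y, hY, U, hU⟩ := exists_inducedCopyAt_of_exStar_lt (comapGraph_isRGraph g E)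
    (comapGraph_isRGraph g E₀) (disjoint_comapGraph g hd) (by rwa [card_comapGraph g hE, hg])
  refine ⟨Y.map (mapEmbedding g).toEmbedding, ?_, U.map g, ?_, hU.map g fun e he => ?_⟩
  · intro e he
    simp only [mem_map, RelEmbedding.coe_toEmbedding, mapEmbedding_apply] at he
    obtain ⟨a, ha, rfl⟩ := he
    exact mem_filter.2 ⟨((mem_comapGraph g).1 (hY ha)).2, hsub a⟩
  · exact hsub U
  · simp [mem_comapGraph, he]

lemma exists_subset_card_richSets_le {n m : ℕ} {E E₀ : Finset (Finset (Fin n))} (hvm : v ≤ m)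
    (hE : IsRGraph 2 n E) (hd : Disjoint E E₀) :
    ∃ X ⊆ E, #(richSets E m (exStar v F m)) ≤
      2 ^ m.choose 2 * (n - v).choose (m - v) *
        {U | IsInducedCopyAt 2 v n F (E₀ ∪ X) U}.ncard := by
  set R := richSets E m (exStar v F m)
  have hcard : ∀ W ∈ R, #W = m := fun W hW => mem_powersetCard_univ.1 (mem_filter.1 hW).1
  have hwit : ∀ W ∈ R, ∃ Y U, Y ⊆ {e ∈ E | e ⊆ W} ∧ U ⊆ W ∧
      IsInducedCopyAt 2 v n F (E₀ ∪ Y) U := by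
    intro W hW
    have hlt := (mem_filter.1 hW).2
    rw [← hcard W hW] at hlt
    obtain ⟨Y, hY, U, hUW, hU⟩ := exists_inducedCopyAt_subset hE hd hlt
    exact ⟨Y, U, hY, hUW, hU⟩
  choose! Y U hY hUW hU using hwit
  obtain ⟨X, hXE, hX⟩ := exists_subset_card_le_card_filter_inter_eq (K := m.choose 2) (B := Y)
    (fun W hW => ⟨filter_subset _ E, hcard W hW ▸ card_filter_subset_le_choose hE W⟩) hY
  refine ⟨X, hXE, ?_⟩
  set T := {W ∈ R | X ∩ {e ∈ E | e ⊆ W} = Y W}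
  have hTR : ∀ W ∈ T, W ∈ R := fun W hW => (mem_filter.1 hW).1
  have hcopy : ∀ W ∈ T, IsInducedCopyAt 2 v n F (E₀ ∪ X) (U W) := by
    intro W hW
    refine (hU W (hTR W hW)).congr fun e he => ?_
    have heW : e ⊆ W := he.trans (hUW W (hTR W hW))
    rw [← (mem_filter.1 hW).2]
    simp only [mem_union, mem_inter, mem_filter]
    have heE : e ∈ X → e ∈ E := @hXE e
    tauto
  have hfibres : #T ≤ (n - v).choose (m - v) * #(T.image U) := by
    simpa using card_le_choose_mul_card_image (fun W hW => hcard W (hTR W hW))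
      (fun W hW => hUW W (hTR W hW)) (fun W hW => (hU W (hTR W hW)).card_eq) hvm
  have himage : #(T.image U) ≤ {U | IsInducedCopyAt 2 v n F (E₀ ∪ X) U}.ncard := by
    rw [← Set.ncard_coe_finset]
    refine Set.ncard_le_ncard (fun U' hU' => ?_) (Set.toFinite _)
    obtain ⟨W, hW, rfl⟩ := mem_image.1 hU'
    exact hcopy W hW
  calc #R ≤ #T * 2 ^ m.choose 2 := hX
    _ ≤ (n - v).choose (m - v) * {U | IsInducedCopyAt 2 v n F (E₀ ∪ X) U}.ncard *
        2 ^ m.choose 2 := by gcongr; exact hfibres.trans (by gcongr)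
    _ = _ := by ring

end ExStar

theorem stmt_4_general (v : ℕ) (F : Finset (Finset (Fin v)))
    (ε : ℝ) (hε : 0 < ε) :
    ∃ (n₀ : ℕ) (δ : ℝ), 0 < δ ∧ ∀ n, n₀ < n →
      ∀ E : Finset (Finset (Fin n)), IsRGraph 2 n E →
      (exStar v F n : ℝ) + ε * (n.choose 2 : ℝ) ≤ E.card →
      ∀ E₀ : Finset (Finset (Fin n)), IsRGraph 2 n E₀ → Disjoint E₀ E →
      ∃ X ⊆ E, δ * (n : ℝ) ^ v ≤
        (Set.ncard {U : Finset (Fin n) | IsInducedCopyAt 2 v n F (E₀ ∪ X) U} : ℝ) := by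
  obtain ⟨m, hm, hmin⟩ := exists_forall_lt_add (d := fun k => (exStar v F k : ℝ) / k.choose 2)
    ⟨0, by rintro _ ⟨k, rfl⟩; positivity⟩ (max v 2) (half_pos hε)
  obtain ⟨hvm, h2m⟩ := max_le_iff.1 hm
  have hmv := Nat.choose_pos hvm
  refine ⟨max m (2 * v), ε / 2 / (2 ^ m.choose 2 * m.choose v * v.factorial * 2 ^ v),
    by positivity, fun n hn E hE hEcard E₀ _ hd => ?_⟩
  obtain ⟨hmn, h2v⟩ := max_lt_iff.1 hn
  have hn2 : (0 : ℝ) < n.choose 2 := by exact_mod_cast Nat.choose_pos (by omega)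
  have hdense : (exStar v F n : ℝ) / n.choose 2 + ε ≤ #E / n.choose 2 := by
    rw [div_add' _ _ _ hn2.ne', div_le_div_iff_of_pos_right hn2]
    exact hEcard
  have hrich := mul_choose_le_card_richSets hE h2m hmn.le
    (a := exStar v F m) (η := ε / 2) (by linarith [hmin n (by omega)])
  obtain ⟨X, hXE, hX⟩ := exists_subset_card_richSets_le (F := F) hvm hE hd.symm
  refine ⟨X, hXE, div_mul_pow_le_of_mul_choose_le (by positivity) (by positivity) hvm hmn.le
    (by omega) (hrich.trans ?_)⟩
  exact_mod_cast hX

/-- **Corollary.** For a `2`-graph `F` on `v` vertices and `ε > 0` there are `n₀` and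
`δ > 0` such that for `n > n₀`: if `E` is a graph on `n` vertices with at least
`ex*(n,F) + ε C(n,2)` edges, then for every edge set `E₀` disjoint from `E` there is
`X ⊆ E` such that `(V, E₀ ∪ X)` contains at least `δ n^v` induced copies of `F`. -/
theorem stmt_4 (v : ℕ) (F : Finset (Finset (Fin v))) (hF : IsRGraph 2 v F)
    (ε : ℝ) (hε : 0 < ε) :
    ∃ (n₀ : ℕ) (δ : ℝ), 0 < δ ∧ ∀ n, n₀ < n →
      ∀ E : Finset (Finset (Fin n)), IsRGraph 2 n E →
      (exStar v F n : ℝ) + ε * (n.choose 2 : ℝ) ≤ E.card →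
      ∀ E₀ : Finset (Finset (Fin n)), IsRGraph 2 n E₀ → Disjoint E₀ E →
      ∃ X ⊆ E, δ * (n : ℝ) ^ v ≤
        (Set.ncard {U : Finset (Fin n) | IsInducedCopyAt 2 v n F (E₀ ∪ X) U} : ℝ) :=
  stmt_4_general v F ε hε
end
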